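/- arXiv:2512.01327 — 13 statements merged into one kernel-verified Lean document; each statement's English description precedes it below -/
import Mathlib

section
/- Let φ₁, φ₂, θ ∈ [−π, π] with φ₁ ≠ 0, φ₂ ≠ 0, |θ| ≠ |φ₊|, |θ| ≠ |φ₋|, S₋ ≠ 0, and suppose |θ| < φ_l or |θ| > φ_u (case (i)). Define χ = 4·arctan((m₊ − m₋)/(m₊ + m₋)). Then sin(χ/2) ≠ 0, sin²(θ/2) = S₊ − S₋/sin(χ/2), and (m₊² + m₋²)/2 = |S₋/sin(χ/2)|. -/
lemma sin_two_arctan (x : ℝ) : Real.sin (2 * Real.arctan x) = 2*x/(1+x^2) := by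
  have h1 : (0:ℝ) < 1 + x^2 := by positivity
  have h2 : Real.sqrt (1+x^2) ≠ 0 := by positivity
  rw [Real.sin_two_mul, Real.sin_arctan, Real.cos_arctan]
  field_simp
  rw [Real.sq_sqrt h1.le]

lemma core_sin (A B : ℝ) (hsgn : (0 < A ∧ 0 < B) ∨ (A < 0 ∧ B < 0)) :
    Real.sin (2 * Real.arctan ((Real.sqrt |A| - Real.sqrt |B|) / (Real.sqrt |A| + Real.sqrt |B|)))
      = (A - B) / (A + B) := by
  have hA0 : A ≠ 0 := by rcases hsgn with ⟨h,_⟩|⟨h,_⟩ <;> [exact h.ne'; exact h.ne]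
  have hB0 : B ≠ 0 := by rcases hsgn with ⟨_,h⟩|⟨_,h⟩ <;> [exact h.ne'; exact h.ne]
  set p := Real.sqrt |A| with hp
  set q := Real.sqrt |B| with hq
  have hp0 : 0 < p := Real.sqrt_pos.mpr (abs_pos.mpr hA0)
  have hq0 : 0 < q := Real.sqrt_pos.mpr (abs_pos.mpr hB0)
  have hp2 : p ^ 2 = |A| := Real.sq_sqrt (abs_nonneg A)
  have hq2 : q ^ 2 = |B| := Real.sq_sqrt (abs_nonneg B)
  have hpq : p + q ≠ 0 := by positivity
  rw [sin_two_arctan]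
  have key : 2 * ((p - q)/(p + q)) / (1 + ((p - q)/(p + q))^2) = (p^2 - q^2)/(p^2 + q^2) := by
    have hden : p^2 + q^2 ≠ 0 := by positivity
    field_simp
    ring
  rw [key, hp2, hq2]
  rcases hsgn with ⟨h1,h2⟩|⟨h1,h2⟩
  · rw [abs_of_pos h1, abs_of_pos h2]
  · rw [abs_of_neg h1, abs_of_neg h2]
    rw [show -A - -B = -(A-B) by ring, show -A + -B = -(A+B) by ring, neg_div_neg_eq]

lemma master (a b s : ℝ)
    (hsgn : (0 < a - s ∧ 0 < b - s) ∨ (a - s < 0 ∧ b - s < 0)) (hab : a ≠ b) :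
    Real.sin (4 * Real.arctan ((Real.sqrt |a - s| - Real.sqrt |b - s|) /
        (Real.sqrt |a - s| + Real.sqrt |b - s|)) / 2) ≠ 0 ∧
    s = (a + b)/2 - ((a - b)/2) / Real.sin (4 * Real.arctan ((Real.sqrt |a - s| - Real.sqrt |b - s|) /
        (Real.sqrt |a - s| + Real.sqrt |b - s|)) / 2) ∧
    (Real.sqrt |a - s| ^ 2 + Real.sqrt |b - s| ^ 2) / 2 =
      |((a - b)/2) / Real.sin (4 * Real.arctan ((Real.sqrt |a - s| - Real.sqrt |b - s|) /
        (Real.sqrt |a - s| + Real.sqrt |b - s|)) / 2)| := by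
  have e : ∀ t : ℝ, 4 * Real.arctan t / 2 = 2 * Real.arctan t := fun t => by ring
  rw [e, core_sin _ _ hsgn]
  have hD : a - s - (b - s) ≠ 0 := fun h => hab (by linarith)
  have hSum : a - s + (b - s) ≠ 0 := by
    rcases hsgn with ⟨h1,h2⟩|⟨h1,h2⟩ <;> intro h <;> linarith
  have hab2 : a - b ≠ 0 := sub_ne_zero.mpr hab
  have hval : ((a - b)/2) / ((a - s - (b - s)) / (a - s + (b - s))) = (a - s + (b - s))/2 := by
    field_simp
    ring
  refine ⟨div_ne_zero hD hSum, ?_, ?_⟩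
  · rw [hval]; ring
  · rw [Real.sq_sqrt (abs_nonneg _), Real.sq_sqrt (abs_nonneg _)]
    have habs : |a - s| + |b - s| = |a - s + (b - s)| := by
      rcases hsgn with ⟨h1,h2⟩|⟨h1,h2⟩
      · rw [abs_of_pos h1, abs_of_pos h2, abs_of_pos (by linarith)]
      · rw [abs_of_neg h1, abs_of_neg h2, abs_of_neg (by linarith)]; ring
    rw [hval, abs_div, habs]
    norm_num

lemma sinsq_lt {x y : ℝ} (hx : |x| ≤ Real.pi) (hy : |y| ≤ Real.pi) (h : |x| < |y|) :
    Real.sin (x/2)^2 < Real.sin (y/2)^2 := by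
  have ex : Real.sin (x/2)^2 = Real.sin (|x|/2)^2 := by
    rcases abs_cases x with ⟨e,_⟩|⟨e,_⟩ <;> rw [e] <;> simp [neg_div, Real.sin_neg]
  have ey : Real.sin (y/2)^2 = Real.sin (|y|/2)^2 := by
    rcases abs_cases y with ⟨e,_⟩|⟨e,_⟩ <;> rw [e] <;> simp [neg_div, Real.sin_neg]
  rw [ex, ey]
  have h1 : Real.sin (|x|/2) < Real.sin (|y|/2) := by
    apply Real.strictMonoOn_sin ?_ ?_ (by linarith)
    · exact Set.mem_Icc.mpr ⟨by nlinarith [abs_nonneg x, Real.pi_pos], by linarith⟩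
    · exact Set.mem_Icc.mpr ⟨by nlinarith [abs_nonneg y, Real.pi_pos], by linarith⟩
  have h0 : 0 ≤ Real.sin (|x|/2) := by
    apply Real.sin_nonneg_of_nonneg_of_le_pi <;> nlinarith [abs_nonneg x, Real.pi_pos]
  nlinarith



/-- `S₊ = (sin²(φ₊/2) + sin²(φ₋/2))/2` where `φ₊ = (φ₁+φ₂)/2`, `φ₋ = (φ₁−φ₂)/2`. -/
noncomputable def Sp (φ₁ φ₂ : ℝ) : ℝ :=
  (Real.sin ((φ₁ + φ₂) / 4) ^ 2 + Real.sin ((φ₁ - φ₂) / 4) ^ 2) / 2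

/-- `S₋ = (sin²(φ₊/2) − sin²(φ₋/2))/2`. -/
noncomputable def Sm (φ₁ φ₂ : ℝ) : ℝ :=
  (Real.sin ((φ₁ + φ₂) / 4) ^ 2 - Real.sin ((φ₁ - φ₂) / 4) ^ 2) / 2

/-- `φ_u = max(|φ₊|, |φ₋|)`. -/
noncomputable def phiu (φ₁ φ₂ : ℝ) : ℝ := max |(φ₁ + φ₂) / 2| |(φ₁ - φ₂) / 2|

/-- `φ_l = min(|φ₊|, |φ₋|)`. -/
noncomputable def phil (φ₁ φ₂ : ℝ) : ℝ := min |(φ₁ + φ₂) / 2| |(φ₁ - φ₂) / 2|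

/-- `m₊ = √|sin²(φ₊/2) − sin²(θ/2)|`. -/
noncomputable def mplus (φ₁ φ₂ θ : ℝ) : ℝ :=
  Real.sqrt |Real.sin ((φ₁ + φ₂) / 4) ^ 2 - Real.sin (θ / 2) ^ 2|

/-- `m₋ = √|sin²(φ₋/2) − sin²(θ/2)|`. -/
noncomputable def mminus (φ₁ φ₂ θ : ℝ) : ℝ :=
  Real.sqrt |Real.sin ((φ₁ - φ₂) / 4) ^ 2 - Real.sin (θ / 2) ^ 2|

/-- The weight `χ = 4·arctan((m₊ − m₋)/(m₊ + m₋))`. -/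
noncomputable def chi (φ₁ φ₂ θ : ℝ) : ℝ :=
  4 * Real.arctan ((mplus φ₁ φ₂ θ - mminus φ₁ φ₂ θ) / (mplus φ₁ φ₂ θ + mminus φ₁ φ₂ θ))

/-- `r₊ = log|sin((φ₊+θ)/2)/sin((φ₊−θ)/2)|`. -/
noncomputable def rplus (φ₁ φ₂ θ : ℝ) : ℝ :=
  Real.log |Real.sin (((φ₁ + φ₂) / 2 + θ) / 2) / Real.sin (((φ₁ + φ₂) / 2 - θ) / 2)|

/-- `r₋ = log|sin((φ₋+θ)/2)/sin((φ₋−θ)/2)|`. -/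
noncomputable def rminus (φ₁ φ₂ θ : ℝ) : ℝ :=
  Real.log |Real.sin (((φ₁ - φ₂) / 2 + θ) / 2) / Real.sin (((φ₁ - φ₂) / 2 - θ) / 2)|

/-- `C₊ = (cos²(φ₊/2) + cos²(φ₋/2))/2`. -/
noncomputable def Cp (φ₁ φ₂ : ℝ) : ℝ :=
  (Real.cos ((φ₁ + φ₂) / 4) ^ 2 + Real.cos ((φ₁ - φ₂) / 4) ^ 2) / 2

/-- `C₋ = (cos²(φ₊/2) − cos²(φ₋/2))/2`. -/
noncomputable def Cm (φ₁ φ₂ : ℝ) : ℝ :=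
  (Real.cos ((φ₁ + φ₂) / 4) ^ 2 - Real.cos ((φ₁ - φ₂) / 4) ^ 2) / 2

/-- Case (i) of Proposition 3 (fundamental formula): relation between the measurement angle
`θ`, the weight `χ`, and the coefficient `C² = (m₊² + m₋²)/2`. -/
theorem stmt2 (φ₁ φ₂ θ : ℝ)
    (hφ₁ : φ₁ ∈ Set.Icc (-Real.pi) Real.pi)
    (hφ₂ : φ₂ ∈ Set.Icc (-Real.pi) Real.pi)
    (hθ : θ ∈ Set.Icc (-Real.pi) Real.pi)
    (hφ₁0 : φ₁ ≠ 0) (hφ₂0 : φ₂ ≠ 0)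
    (hp : |θ| ≠ |(φ₁ + φ₂) / 2|) (hm : |θ| ≠ |(φ₁ - φ₂) / 2|)
    (hS : Sm φ₁ φ₂ ≠ 0)
    (hcase : |θ| < phil φ₁ φ₂ ∨ phiu φ₁ φ₂ < |θ|) :
    Real.sin (chi φ₁ φ₂ θ / 2) ≠ 0 ∧
    Real.sin (θ / 2) ^ 2 = Sp φ₁ φ₂ - Sm φ₁ φ₂ / Real.sin (chi φ₁ φ₂ θ / 2) ∧
    (mplus φ₁ φ₂ θ ^ 2 + mminus φ₁ φ₂ θ ^ 2) / 2 = |Sm φ₁ φ₂ / Real.sin (chi φ₁ φ₂ θ / 2)| := by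
  obtain ⟨h1l, h1r⟩ := hφ₁
  obtain ⟨h2l, h2r⟩ := hφ₂
  obtain ⟨htl, htr⟩ := hθ
  have hxθ : |θ| ≤ Real.pi := abs_le.mpr ⟨htl, htr⟩
  have hyp : |(φ₁+φ₂)/2| ≤ Real.pi := abs_le.mpr ⟨by linarith, by linarith⟩
  have hym : |(φ₁-φ₂)/2| ≤ Real.pi := abs_le.mpr ⟨by linarith, by linarith⟩
  have e1 : (φ₁+φ₂)/2/2 = (φ₁+φ₂)/4 := by ring
  have e2 : (φ₁-φ₂)/2/2 = (φ₁-φ₂)/4 := by ring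
  have hsgn : (0 < Real.sin ((φ₁ + φ₂)/4)^2 - Real.sin (θ/2)^2 ∧
      0 < Real.sin ((φ₁ - φ₂)/4)^2 - Real.sin (θ/2)^2) ∨
      (Real.sin ((φ₁ + φ₂)/4)^2 - Real.sin (θ/2)^2 < 0 ∧
      Real.sin ((φ₁ - φ₂)/4)^2 - Real.sin (θ/2)^2 < 0) := by
    unfold phil phiu at hcase
    rcases hcase with hc | hc
    · left
      have h1 := sinsq_lt hxθ hyp (hc.trans_le (min_le_left _ _))
      have h2 := sinsq_lt hxθ hym (hc.trans_le (min_le_right _ _))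
      rw [e1] at h1; rw [e2] at h2
      constructor <;> linarith
    · right
      have h1 := sinsq_lt hyp hxθ ((le_max_left _ _).trans_lt hc)
      have h2 := sinsq_lt hym hxθ ((le_max_right _ _).trans_lt hc)
      rw [e1] at h1; rw [e2] at h2
      constructor <;> linarith
  have hab : Real.sin ((φ₁ + φ₂)/4)^2 ≠ Real.sin ((φ₁ - φ₂)/4)^2 := by
    intro h
    apply hS
    unfold Sm
    rw [h]
    ring
  have := master _ _ _ hsgn hab
  unfold Sp Sm mplus mminus chi
  exact this
end

section
/- Let φ₁, φ₂, θ ∈ [−π, π] with |θ| ≠ |φ₊| and |θ| ≠ |φ₋|. Then the product sin((θ+φ₊)/2)·sin((θ−φ₊)/2)·sin((θ+φ₋)/2)·sin((θ−φ₋)/2) is nonzero; it is positive if and only if |θ| < φ_l or |θ| > φ_u, and negative if and only if φ_l < |θ| < φ_u. -/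
/-- The product `sin((θ+φ₊)/2)·sin((θ−φ₊)/2)·sin((θ+φ₋)/2)·sin((θ−φ₋)/2)`. -/
noncomputable def sineProd (φ₁ φ₂ θ : ℝ) : ℝ :=
  Real.sin ((θ + (φ₁ + φ₂) / 2) / 2) * Real.sin ((θ - (φ₁ + φ₂) / 2) / 2) *
    Real.sin ((θ + (φ₁ - φ₂) / 2) / 2) * Real.sin ((θ - (φ₁ - φ₂) / 2) / 2)


private lemma key_sin (θ φ : ℝ) :
    Real.sin ((θ + φ) / 2) * Real.sin ((θ - φ) / 2) =
      Real.sin (θ / 2) ^ 2 - Real.sin (φ / 2) ^ 2 := by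
  have e1 : (θ + φ) / 2 = θ / 2 + φ / 2 := by ring
  have e2 : (θ - φ) / 2 = θ / 2 - φ / 2 := by ring
  rw [e1, e2, Real.sin_add, Real.sin_sub]
  have h1 := Real.sin_sq_add_cos_sq (θ / 2)
  have h2 := Real.sin_sq_add_cos_sq (φ / 2)
  nlinarith [h1, h2]

private lemma gmono : StrictMonoOn (fun x => Real.sin (x / 2) ^ 2)
    (Set.Icc (0:ℝ) Real.pi) := by
  intro x hx y hy hxy
  have hpi := Real.pi_pos
  have hs : Real.sin (x / 2) < Real.sin (y / 2) := by
    apply Real.strictMonoOn_sin ⟨by linarith [hx.1], by linarith [hx.2]⟩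
      ⟨by linarith [hy.1], by linarith [hy.2]⟩ (by linarith)
  have hx0 : 0 ≤ Real.sin (x / 2) :=
    Real.sin_nonneg_of_nonneg_of_le_pi (by linarith [hx.1]) (by linarith [hx.2])
  simp only
  nlinarith

private lemma abs_sin_sq (x : ℝ) : Real.sin (|x| / 2) ^ 2 = Real.sin (x / 2) ^ 2 := by
  rcases abs_choice x with h | h <;> rw [h]
  rw [neg_div, Real.sin_neg, neg_sq]

/-- The sign dichotomy distinguishing cases (i) and (ii). -/
theorem stmt6 (φ₁ φ₂ θ : ℝ)
    (hφ₁ : φ₁ ∈ Set.Icc (-Real.pi) Real.pi)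
    (hφ₂ : φ₂ ∈ Set.Icc (-Real.pi) Real.pi)
    (hθ : θ ∈ Set.Icc (-Real.pi) Real.pi)
    (hp : |θ| ≠ |(φ₁ + φ₂) / 2|) (hm : |θ| ≠ |(φ₁ - φ₂) / 2|) :
    sineProd φ₁ φ₂ θ ≠ 0 ∧
    (0 < sineProd φ₁ φ₂ θ ↔ (|θ| < phil φ₁ φ₂ ∨ phiu φ₁ φ₂ < |θ|)) ∧
    (sineProd φ₁ φ₂ θ < 0 ↔ (phil φ₁ φ₂ < |θ| ∧ |θ| < phiu φ₁ φ₂)) := by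
  have hpi := Real.pi_pos
  set p := |(φ₁ + φ₂) / 2| with hp_def
  set m := |(φ₁ - φ₂) / 2| with hm_def
  set t := |θ| with ht_def
  have htI : t ∈ Set.Icc (0:ℝ) Real.pi := ⟨abs_nonneg _, abs_le.mpr ⟨hθ.1, hθ.2⟩⟩
  have hpI : p ∈ Set.Icc (0:ℝ) Real.pi :=
    ⟨abs_nonneg _, abs_le.mpr ⟨by linarith [hφ₁.1, hφ₂.1], by linarith [hφ₁.2, hφ₂.2]⟩⟩
  have hmI : m ∈ Set.Icc (0:ℝ) Real.pi :=
    ⟨abs_nonneg _, abs_le.mpr ⟨by linarith [hφ₁.1, hφ₂.2], by linarith [hφ₁.2, hφ₂.1]⟩⟩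
  set S := Real.sin (θ / 2) ^ 2 with hS_def
  set P := Real.sin ((φ₁ + φ₂) / 4) ^ 2 with hP_def
  set M := Real.sin ((φ₁ - φ₂) / 4) ^ 2 with hM_def
  have hgS : Real.sin (t / 2) ^ 2 = S := abs_sin_sq θ
  have hgP : Real.sin (p / 2) ^ 2 = P := by
    rw [abs_sin_sq]; rw [hP_def, show (φ₁ + φ₂) / 2 / 2 = (φ₁ + φ₂) / 4 by ring]
  have hgM : Real.sin (m / 2) ^ 2 = M := by
    rw [abs_sin_sq]; rw [hM_def, show (φ₁ - φ₂) / 2 / 2 = (φ₁ - φ₂) / 4 by ring]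
  have hSP : S < P ↔ t < p := by rw [← hgS, ← hgP]; exact gmono.lt_iff_lt htI hpI
  have hPS : P < S ↔ p < t := by rw [← hgS, ← hgP]; exact gmono.lt_iff_lt hpI htI
  have hSM : S < M ↔ t < m := by rw [← hgS, ← hgM]; exact gmono.lt_iff_lt htI hmI
  have hMS : M < S ↔ m < t := by rw [← hgS, ← hgM]; exact gmono.lt_iff_lt hmI htI
  have hprod : sineProd φ₁ φ₂ θ = (S - P) * (S - M) := by
    have e1 := key_sin θ ((φ₁ + φ₂) / 2)
    have e2 := key_sin θ ((φ₁ - φ₂) / 2)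
    rw [show (φ₁ + φ₂) / 2 / 2 = (φ₁ + φ₂) / 4 by ring] at e1
    rw [show (φ₁ - φ₂) / 2 / 2 = (φ₁ - φ₂) / 4 by ring] at e2
    unfold sineProd
    rw [mul_assoc, e1, e2]
  rw [hprod]
  unfold phil phiu
  rcases lt_trichotomy t p with h1 | h1 | h1
  · rcases lt_trichotomy t m with h2 | h2 | h2
    · have a1 : S < P := hSP.mpr h1
      have a2 : S < M := hSM.mpr h2
      have hpos : 0 < (S - P) * (S - M) := mul_pos_of_neg_of_neg (by linarith) (by linarith)
      refine ⟨ne_of_gt hpos, ⟨fun _ => Or.inl (lt_min h1 h2), fun _ => hpos⟩, ?_⟩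
      constructor
      · intro h; linarith
      · rintro ⟨hl, hu⟩
        rcases min_lt_iff.mp hl with h | h <;> linarith
    · exact absurd h2 hm
    · have a1 : S < P := hSP.mpr h1
      have a2 : M < S := hMS.mpr h2
      have hneg : (S - P) * (S - M) < 0 := mul_neg_of_neg_of_pos (by linarith) (by linarith)
      refine ⟨ne_of_lt hneg, ⟨?_, ?_⟩, ?_⟩
      · intro h; linarith
      · rintro (h | h)
        · have := min_le_right p m; linarith [lt_min_iff.mp h |>.2]
        · have := le_max_left p m; linarith [max_lt_iff.mp h |>.1]
      · exact ⟨fun _ => ⟨min_lt_iff.mpr (Or.inr h2), lt_max_iff.mpr (Or.inl h1)⟩, fun _ => hneg⟩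
  · exact absurd h1 hp
  · rcases lt_trichotomy t m with h2 | h2 | h2
    · have a1 : P < S := hPS.mpr h1
      have a2 : S < M := hSM.mpr h2
      have hneg : (S - P) * (S - M) < 0 := mul_neg_of_pos_of_neg (by linarith) (by linarith)
      refine ⟨ne_of_lt hneg, ⟨?_, ?_⟩, ?_⟩
      · intro h; linarith
      · rintro (h | h)
        · have := lt_min_iff.mp h; linarith [this.1]
        · have := max_lt_iff.mp h; linarith [this.2]
      · exact ⟨fun _ => ⟨min_lt_iff.mpr (Or.inl h1), lt_max_iff.mpr (Or.inr h2)⟩, fun _ => hneg⟩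
    · exact absurd h2 hm
    · have a1 : P < S := hPS.mpr h1
      have a2 : M < S := hMS.mpr h2
      have hpos : 0 < (S - P) * (S - M) := mul_pos (by linarith) (by linarith)
      refine ⟨ne_of_gt hpos, ⟨fun _ => Or.inr (max_lt h1 h2), fun _ => hpos⟩, ?_⟩
      constructor
      · intro h; linarith
      · rintro ⟨hl, hu⟩
        have := max_lt h1 h2; linarith
end

section
/- Let φ₁, φ₂ ∈ [−π, π] with φ₁ ≠ 0, φ₂ ≠ 0 and S₋ ≠ 0. Then 0 < S₊ < 1, so there is a unique θ* ∈ (0, π) with sin(θ*/2) = √S₊; setting r₊* = log|sin((φ₊+θ*)/2)/sin((φ₊−θ*)/2)| and r₋* = log|sin((φ₋+θ*)/2)/sin((φ₋−θ*)/2)| (all well defined since |θ*| ≠ |φ₊|, |θ*| ≠ |φ₋|), one has cosh((r₊* + r₋*)/2) = √(S₊·C₊)·|sin(φ₁/2)| / |S₋| and cosh((r₊* − r₋*)/2) = √(S₊·C₊)·|sin(φ₂/2)| / |S₋|. -/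
set_option maxHeartbeats 1000000


/-- Key computation: if `sin² t = (sin² u + sin² v)/2` and `sin² u ≠ sin² v`, then
`cosh((log|sin(u+t)/sin(u-t)| + log|sin(v+t)/sin(v-t)|)/2)` has a closed form. -/
lemma aux_cosh (u v t : ℝ)
    (hs2 : Real.sin t ^ 2 = (Real.sin u ^ 2 + Real.sin v ^ 2) / 2)
    (hSm : (Real.sin u ^ 2 - Real.sin v ^ 2) / 2 ≠ 0) :
    Real.cosh ((Real.log |Real.sin (u + t) / Real.sin (u - t)| +
        Real.log |Real.sin (v + t) / Real.sin (v - t)|) / 2) =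
      Real.sqrt ((Real.sin u ^ 2 + Real.sin v ^ 2) / 2 *
          ((Real.cos u ^ 2 + Real.cos v ^ 2) / 2)) * |Real.sin (u + v)| /
        |(Real.sin u ^ 2 - Real.sin v ^ 2) / 2| := by
  have hcu : Real.cos u ^ 2 = 1 - Real.sin u ^ 2 := by
    have := Real.sin_sq_add_cos_sq u; linarith
  have hcv : Real.cos v ^ 2 = 1 - Real.sin v ^ 2 := by
    have := Real.sin_sq_add_cos_sq v; linarith
  have hc2 : Real.cos t ^ 2 = 1 - Real.sin t ^ 2 := by
    have := Real.sin_sq_add_cos_sq t; linarith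
  have hPQ : Real.sin (u + t) * Real.sin (u - t)
      = (Real.sin u ^ 2 - Real.sin v ^ 2) / 2 := by
    rw [Real.sin_add, Real.sin_sub]
    linear_combination ((1) * Real.sin u ^ 2) * hc2 + ((-1) * Real.cos u ^ 2 + (-1) * Real.sin u ^ 2) * hs2 + ((-1/2) * Real.sin v ^ 2 + (-1/2) * Real.sin u ^ 2) * hcu
  have hRT : Real.sin (v + t) * Real.sin (v - t)
      = -((Real.sin u ^ 2 - Real.sin v ^ 2) / 2) := by
    rw [Real.sin_add, Real.sin_sub]
    linear_combination ((1) * Real.sin v ^ 2) * hc2 + ((-1) * Real.cos v ^ 2 + (-1) * Real.sin v ^ 2) * hs2 + ((-1/2) * Real.sin v ^ 2 + (-1/2) * Real.sin u ^ 2) * hcv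
  have hP : Real.sin (u + t) ≠ 0 := by
    intro h; exact hSm (by rw [← hPQ, h, zero_mul])
  have hQ : Real.sin (u - t) ≠ 0 := by
    intro h; exact hSm (by rw [← hPQ, h, mul_zero])
  have hR : Real.sin (v + t) ≠ 0 := by
    intro h; apply hSm
    have : -((Real.sin u ^ 2 - Real.sin v ^ 2) / 2) = 0 := by rw [← hRT, h, zero_mul]
    linarith
  have hT : Real.sin (v - t) ≠ 0 := by
    intro h; apply hSm
    have : -((Real.sin u ^ 2 - Real.sin v ^ 2) / 2) = 0 := by rw [← hRT, h, mul_zero]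
    linarith
  set P := Real.sin (u + t) with hPdef
  set Q := Real.sin (u - t) with hQdef
  set R := Real.sin (v + t) with hRdef
  set T := Real.sin (v - t) with hTdef
  have hpq : (0:ℝ) < |P / Q| := abs_pos.mpr (div_ne_zero hP hQ)
  have hrt : (0:ℝ) < |R / T| := abs_pos.mpr (div_ne_zero hR hT)
  set L := (Real.log |P / Q| + Real.log |R / T|) / 2 with hLdef
  have hE2 : Real.exp L ^ 2 = |P / Q| * |R / T| := by
    rw [sq, ← Real.exp_add, show L + L = Real.log |P / Q| + Real.log |R / T| by ring,
      Real.exp_add, Real.exp_log hpq, Real.exp_log hrt]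
  set X := Real.sqrt |P * R| with hXdef
  set Y := Real.sqrt |Q * T| with hYdef
  have hXpos : 0 < X := Real.sqrt_pos.mpr (abs_pos.mpr (mul_ne_zero hP hR))
  have hYpos : 0 < Y := Real.sqrt_pos.mpr (abs_pos.mpr (mul_ne_zero hQ hT))
  have habs : |P * R| * |Q * T| = ((Real.sin u ^ 2 - Real.sin v ^ 2) / 2) ^ 2 := by
    rw [← abs_mul, show P * R * (Q * T) = P * Q * (R * T) by ring, hPQ, hRT,
      show (Real.sin u ^ 2 - Real.sin v ^ 2) / 2 * -((Real.sin u ^ 2 - Real.sin v ^ 2) / 2)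
        = -(((Real.sin u ^ 2 - Real.sin v ^ 2) / 2) ^ 2) by ring, abs_neg,
      abs_of_nonneg (sq_nonneg _)]
  have hXY : X * Y = |(Real.sin u ^ 2 - Real.sin v ^ 2) / 2| := by
    rw [hXdef, hYdef, ← Real.sqrt_mul (abs_nonneg _), habs, Real.sqrt_sq_eq_abs]
  have hEX : Real.exp L = X / Y := by
    have h2 : (X / Y) ^ 2 = |P / Q| * |R / T| := by
      rw [div_pow, hXdef, hYdef, Real.sq_sqrt (abs_nonneg _), Real.sq_sqrt (abs_nonneg _),
        abs_div, abs_div, abs_mul, abs_mul]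
      field_simp
    rw [← Real.sqrt_sq (Real.exp_pos L).le, hE2, ← h2,
      Real.sqrt_sq (by positivity)]
  have hSpCp : 0 ≤ (Real.sin u ^ 2 + Real.sin v ^ 2) / 2 *
      ((Real.cos u ^ 2 + Real.cos v ^ 2) / 2) := by positivity
  have hNum : X ^ 2 + Y ^ 2 =
      2 * (Real.sqrt ((Real.sin u ^ 2 + Real.sin v ^ 2) / 2 *
        ((Real.cos u ^ 2 + Real.cos v ^ 2) / 2)) * |Real.sin (u + v)|) := by
    have hsq : (X ^ 2 + Y ^ 2) ^ 2 =
        (2 * (Real.sqrt ((Real.sin u ^ 2 + Real.sin v ^ 2) / 2 *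
          ((Real.cos u ^ 2 + Real.cos v ^ 2) / 2)) * |Real.sin (u + v)|)) ^ 2 := by
      have hXX : X ^ 2 = |P * R| := Real.sq_sqrt (abs_nonneg _)
      have hYY : Y ^ 2 = |Q * T| := Real.sq_sqrt (abs_nonneg _)
      have e1 : (X ^ 2 + Y ^ 2) ^ 2 = (P * R) ^ 2 + (Q * T) ^ 2 +
          2 * (((Real.sin u ^ 2 - Real.sin v ^ 2) / 2) ^ 2) := by
        rw [hXX, hYY, show (|P * R| + |Q * T|) ^ 2
          = |P * R| ^ 2 + |Q * T| ^ 2 + 2 * (|P * R| * |Q * T|) by ring, habs,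
          sq_abs, sq_abs]
      have e2 : (2 * (Real.sqrt ((Real.sin u ^ 2 + Real.sin v ^ 2) / 2 *
          ((Real.cos u ^ 2 + Real.cos v ^ 2) / 2)) * |Real.sin (u + v)|)) ^ 2
          = 4 * ((Real.sin u ^ 2 + Real.sin v ^ 2) / 2 *
            ((Real.cos u ^ 2 + Real.cos v ^ 2) / 2)) * Real.sin (u + v) ^ 2 := by
        rw [mul_pow, mul_pow, Real.sq_sqrt hSpCp, sq_abs]; ring
      rw [e1, e2, hPdef, hQdef, hRdef, hTdef, Real.sin_add u t, Real.sin_sub u t,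
        Real.sin_add v t, Real.sin_sub v t, Real.sin_add u v]
      linear_combination ((2) * Real.cos u ^ 2 * Real.sin v ^ 2 * Real.sin t ^ 2 + (8) * Real.sin u * Real.cos u * Real.sin v * Real.cos v * Real.sin t ^ 2 + (2) * Real.sin u ^ 2 * Real.cos v ^ 2 * Real.sin t ^ 2 + (2) * Real.sin u ^ 2 * Real.sin v ^ 2 + (2) * Real.sin u ^ 2 * Real.sin v ^ 2 * Real.cos t ^ 2 + (-2) * Real.sin u ^ 2 * Real.sin v ^ 2 * Real.sin t ^ 2) * hc2 + ((2) * Real.cos u ^ 2 * Real.cos v ^ 2 * Real.sin t ^ 2 + (2) * Real.cos u ^ 2 * Real.sin v ^ 2 + (-2) * Real.cos u ^ 2 * Real.sin v ^ 2 * Real.sin t ^ 2 + (1) * Real.cos u ^ 2 * Real.sin v ^ 2 * Real.cos v ^ 2 + (-1) * Real.cos u ^ 2 * Real.sin v ^ 4 + (8) * Real.sin u * Real.cos u * Real.sin v * Real.cos v + (-8) * Real.sin u * Real.cos u * Real.sin v * Real.cos v * Real.sin t ^ 2 + (-4) * Real.sin u * Real.cos u * Real.sin v ^ 3 * Real.cos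 v + (2) * Real.sin u ^ 2 * Real.cos v ^ 2 + (-2) * Real.sin u ^ 2 * Real.cos v ^ 2 * Real.sin t ^ 2 + (-4) * Real.sin u ^ 2 * Real.sin v ^ 2 + (2) * Real.sin u ^ 2 * Real.sin v ^ 2 * Real.sin t ^ 2 + (-1) * Real.sin u ^ 2 * Real.sin v ^ 2 * Real.cos v ^ 2 + (1) * Real.sin u ^ 2 * Real.sin v ^ 4 + (1) * Real.sin u ^ 2 * Real.cos u ^ 2 * Real.cos v ^ 2 + (-1) * Real.sin u ^ 2 * Real.cos u ^ 2 * Real.sin v ^ 2 + (-4) * Real.sin u ^ 3 * Real.cos u * Real.sin v * Real.cos v + (-1) * Real.sin u ^ 4 * Real.cos v ^ 2 + (1) * Real.sin u ^ 4 * Real.sin v ^ 2) * hs2 + ((-1/2) * Real.sin v ^ 4 * Real.cos v ^ 2 + (-1/2) * Real.sin v ^ 6 + (-1) * Real.cos u ^ 2 * Real.sin v ^ 4 + (-2) * Real.sin u * Real.cos u * Real.sin v ^ 3 * Real.cos v + (-1) * Real.sin u ^ 2 * Real.sin v ^ 2 * Real.cos v ^ 2 + (-1) * Real.sin u ^ 2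 * Real.cos u ^ 2 * Real.sin v ^ 2 + (-2) * Real.sin u ^ 3 * Real.cos u * Real.sin v * Real.cos v + (-1/2) * Real.sin u ^ 4 * Real.cos v ^ 2 + (1/2) * Real.sin u ^ 4 * Real.sin v ^ 2) * hcu + ((-1/2) * Real.sin v ^ 4 + (-2) * Real.sin u * Real.cos u * Real.sin v ^ 3 * Real.cos v + (-1) * Real.sin u ^ 2 * Real.sin v ^ 2 + (-1) * Real.sin u ^ 2 * Real.sin v ^ 2 * Real.cos v ^ 2 + (1) * Real.sin u ^ 2 * Real.sin v ^ 4 + (-2) * Real.sin u ^ 3 * Real.cos u * Real.sin v * Real.cos v + (-1/2) * Real.sin u ^ 4 + (-1) * Real.sin u ^ 4 * Real.cos v ^ 2 + (1) * Real.sin u ^ 4 * Real.sin v ^ 2) * hcv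
    have hL : 0 ≤ X ^ 2 + Y ^ 2 := by positivity
    have hRn : 0 ≤ 2 * (Real.sqrt ((Real.sin u ^ 2 + Real.sin v ^ 2) / 2 *
        ((Real.cos u ^ 2 + Real.cos v ^ 2) / 2)) * |Real.sin (u + v)|) := by positivity
    rw [← Real.sqrt_sq hL, hsq, Real.sqrt_sq hRn]
  rw [Real.cosh_eq, Real.exp_neg, hEX]
  have hfin : (X / Y + (X / Y)⁻¹) / 2 = (X ^ 2 + Y ^ 2) / (2 * (X * Y)) := by
    field_simp
  rw [hfin, hNum, hXY, mul_div_mul_left _ _ (two_ne_zero)]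

lemma aux_cosh' (u v t : ℝ)
    (hs2 : Real.sin t ^ 2 = (Real.sin u ^ 2 + Real.sin v ^ 2) / 2)
    (hSm : (Real.sin u ^ 2 - Real.sin v ^ 2) / 2 ≠ 0) :
    Real.cosh ((Real.log |Real.sin (u + t) / Real.sin (u - t)| -
        Real.log |Real.sin (v + t) / Real.sin (v - t)|) / 2) =
      Real.sqrt ((Real.sin u ^ 2 + Real.sin v ^ 2) / 2 *
          ((Real.cos u ^ 2 + Real.cos v ^ 2) / 2)) * |Real.sin (u - v)| /
        |(Real.sin u ^ 2 - Real.sin v ^ 2) / 2| := by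
  have h := aux_cosh u (-v) t (by rw [Real.sin_neg, neg_sq]; exact hs2)
    (by rw [Real.sin_neg, neg_sq]; exact hSm)
  rw [Real.sin_neg, Real.cos_neg, neg_sq] at h
  rw [show -v + t = -(v - t) by ring, show -v - t = -(v + t) by ring,
    Real.sin_neg, Real.sin_neg, neg_div_neg_eq, ← inv_div (Real.sin (v + t)) (Real.sin (v - t)), abs_inv, Real.log_inv,
    show u + -v = u - v by ring] at h
  rw [sub_eq_add_neg]
  exact h

/-- The weighted Pauli-Y measurement angle `θ*` exists uniquely, and the corresponding
local non-unitary amplitudes are `√(S₊C₊)|sin(φᵢ/2)|/|S₋|`. -/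
theorem stmt7 (φ₁ φ₂ : ℝ)
    (hφ₁ : φ₁ ∈ Set.Icc (-Real.pi) Real.pi)
    (hφ₂ : φ₂ ∈ Set.Icc (-Real.pi) Real.pi)
    (hφ₁0 : φ₁ ≠ 0) (hφ₂0 : φ₂ ≠ 0)
    (hS : Sm φ₁ φ₂ ≠ 0) :
    0 < Sp φ₁ φ₂ ∧ Sp φ₁ φ₂ < 1 ∧
    (∃! θs : ℝ, θs ∈ Set.Ioo 0 Real.pi ∧ Real.sin (θs / 2) = Real.sqrt (Sp φ₁ φ₂)) ∧
    ∀ θs : ℝ, θs ∈ Set.Ioo 0 Real.pi → Real.sin (θs / 2) = Real.sqrt (Sp φ₁ φ₂) →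
      |θs| ≠ |(φ₁ + φ₂) / 2| ∧ |θs| ≠ |(φ₁ - φ₂) / 2| ∧
      Real.cosh ((rplus φ₁ φ₂ θs + rminus φ₁ φ₂ θs) / 2)
        = Real.sqrt (Sp φ₁ φ₂ * Cp φ₁ φ₂) * |Real.sin (φ₁ / 2)| / |Sm φ₁ φ₂| ∧
      Real.cosh ((rplus φ₁ φ₂ θs - rminus φ₁ φ₂ θs) / 2)
        = Real.sqrt (Sp φ₁ φ₂ * Cp φ₁ φ₂) * |Real.sin (φ₂ / 2)| / |Sm φ₁ φ₂| := by
  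
  have hne : Real.sin ((φ₁ + φ₂) / 4) ^ 2 ≠ Real.sin ((φ₁ - φ₂) / 4) ^ 2 := by
    intro h; apply hS; unfold Sm; rw [h]; ring
  have hsu1 : Real.sin ((φ₁ + φ₂) / 4) ^ 2 ≤ 1 := Real.sin_sq_le_one _
  have hsv1 : Real.sin ((φ₁ - φ₂) / 4) ^ 2 ≤ 1 := Real.sin_sq_le_one _
  have hSp_pos : 0 < Sp φ₁ φ₂ := by
    unfold Sp
    rcases lt_or_gt_of_ne hne with h | h <;>
      nlinarith [sq_nonneg (Real.sin ((φ₁ + φ₂) / 4)), sq_nonneg (Real.sin ((φ₁ - φ₂) / 4))]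
  have hSp_lt : Sp φ₁ φ₂ < 1 := by
    unfold Sp
    rcases lt_or_gt_of_ne hne with h | h <;> nlinarith
  have hSm' : (Real.sin ((φ₁ + φ₂) / 4) ^ 2 - Real.sin ((φ₁ - φ₂) / 4) ^ 2) / 2 ≠ 0 := by
    intro h; apply hS; unfold Sm; exact h
  refine ⟨hSp_pos, hSp_lt, ?_, ?_⟩
  · have hq0 : 0 < Real.sqrt (Sp φ₁ φ₂) := Real.sqrt_pos.mpr hSp_pos
    have hq1 : Real.sqrt (Sp φ₁ φ₂) < 1 := by
      nlinarith [Real.sq_sqrt hSp_pos.le, Real.sqrt_nonneg (Sp φ₁ φ₂)]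
    refine ⟨2 * Real.arcsin (Real.sqrt (Sp φ₁ φ₂)), ⟨⟨?_, ?_⟩, ?_⟩, ?_⟩
    · have := Real.arcsin_pos.mpr hq0; linarith
    · have := Real.arcsin_lt_pi_div_two.mpr hq1; linarith
    · rw [show 2 * Real.arcsin (Real.sqrt (Sp φ₁ φ₂)) / 2
        = Real.arcsin (Real.sqrt (Sp φ₁ φ₂)) by ring]
      exact Real.sin_arcsin (by linarith) hq1.le
    · rintro θ ⟨⟨h0, hπ⟩, hsθ⟩
      have harc : Real.arcsin (Real.sin (θ / 2)) = θ / 2 :=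
        Real.arcsin_sin (by linarith [Real.pi_pos]) (by linarith)
      rw [hsθ] at harc
      linarith
  · intro θs hmem hsin
    have hs2' : Real.sin (θs / 2) ^ 2
        = (Real.sin ((φ₁ + φ₂) / 4) ^ 2 + Real.sin ((φ₁ - φ₂) / 4) ^ 2) / 2 := by
      rw [hsin, Real.sq_sqrt hSp_pos.le]; unfold Sp; ring
    refine ⟨?_, ?_, ?_, ?_⟩
    · intro h
      rcases abs_eq_abs.mp h with h' | h'
      · rw [h', show (φ₁ + φ₂) / 2 / 2 = (φ₁ + φ₂) / 4 by ring] at hs2'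
        exact hne (by linarith)
      · rw [h', show -((φ₁ + φ₂) / 2) / 2 = -((φ₁ + φ₂) / 4) by ring,
          Real.sin_neg, neg_sq] at hs2'
        exact hne (by linarith)
    · intro h
      rcases abs_eq_abs.mp h with h' | h'
      · rw [h', show (φ₁ - φ₂) / 2 / 2 = (φ₁ - φ₂) / 4 by ring] at hs2'
        exact hne (by linarith)
      · rw [h', show -((φ₁ - φ₂) / 2) / 2 = -((φ₁ - φ₂) / 4) by ring,
          Real.sin_neg, neg_sq] at hs2'
        exact hne (by linarith)
    · have hrp : rplus φ₁ φ₂ θs = Real.log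
          |Real.sin ((φ₁ + φ₂) / 4 + θs / 2) / Real.sin ((φ₁ + φ₂) / 4 - θs / 2)| := by
        unfold rplus
        rw [show ((φ₁ + φ₂) / 2 + θs) / 2 = (φ₁ + φ₂) / 4 + θs / 2 by ring,
          show ((φ₁ + φ₂) / 2 - θs) / 2 = (φ₁ + φ₂) / 4 - θs / 2 by ring]
      have hrm : rminus φ₁ φ₂ θs = Real.log
          |Real.sin ((φ₁ - φ₂) / 4 + θs / 2) / Real.sin ((φ₁ - φ₂) / 4 - θs / 2)| := by
        unfold rminus
        rw [show ((φ₁ - φ₂) / 2 + θs) / 2 = (φ₁ - φ₂) / 4 + θs / 2 by ring,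
          show ((φ₁ - φ₂) / 2 - θs) / 2 = (φ₁ - φ₂) / 4 - θs / 2 by ring]
      have h := aux_cosh ((φ₁ + φ₂) / 4) ((φ₁ - φ₂) / 4) (θs / 2) hs2' hSm'
      rw [show (φ₁ + φ₂) / 4 + (φ₁ - φ₂) / 4 = φ₁ / 2 by ring] at h
      rw [hrp, hrm, h]
      unfold Sp Cp Sm
      rfl
    · have hrp : rplus φ₁ φ₂ θs = Real.log
          |Real.sin ((φ₁ + φ₂) / 4 + θs / 2) / Real.sin ((φ₁ + φ₂) / 4 - θs / 2)| := by
        unfold rplus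
        rw [show ((φ₁ + φ₂) / 2 + θs) / 2 = (φ₁ + φ₂) / 4 + θs / 2 by ring,
          show ((φ₁ + φ₂) / 2 - θs) / 2 = (φ₁ + φ₂) / 4 - θs / 2 by ring]
      have hrm : rminus φ₁ φ₂ θs = Real.log
          |Real.sin ((φ₁ - φ₂) / 4 + θs / 2) / Real.sin ((φ₁ - φ₂) / 4 - θs / 2)| := by
        unfold rminus
        rw [show ((φ₁ - φ₂) / 2 + θs) / 2 = (φ₁ - φ₂) / 4 + θs / 2 by ring,
          show ((φ₁ - φ₂) / 2 - θs) / 2 = (φ₁ - φ₂) / 4 - θs / 2 by ring]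
      have h := aux_cosh' ((φ₁ + φ₂) / 4) ((φ₁ - φ₂) / 4) (θs / 2) hs2' hSm'
      rw [show (φ₁ + φ₂) / 4 - (φ₁ - φ₂) / 4 = φ₂ / 2 by ring] at h
      rw [hrp, hrm, h]
      unfold Sp Cp Sm
      rfl
end

section
/- Let φ₁, φ₂ ∈ [−π, π]. Then |C₋| ≤ C₊ and C₊ > 0, and the angle χ_c := −2·arcsin(C₋/C₊) satisfies tan(χ_c/4) = tan(φ₁/4)·tan(φ₂/4). Moreover, if in addition φ₂ ≠ 0, (φ₁,φ₂) ≠ (0,0), and sin(φ₊/2)·sin(φ₋/2) ≤ 0, then |S₋| ≤ S₊, S₊ > 0, and the angle χ_s := 2·arcsin(S₋/S₊) satisfies tan(χ_s/4) = tan(φ₁/4)/tan(φ₂/4). -/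
open Real

private lemma sin2arctan (x : ℝ) :
    Real.sin (2 * Real.arctan x) = 2 * x / (1 + x ^ 2) := by
  have h0 : (0:ℝ) < 1 + x ^ 2 := by positivity
  have hss := Real.mul_self_sqrt h0.le
  have hs : Real.sqrt (1 + x ^ 2) ≠ 0 := by positivity
  rw [Real.sin_two_mul, Real.sin_arctan, Real.cos_arctan]
  field_simp
  rw [Real.sq_sqrt h0.le]


private lemma arctan_bound {x : ℝ} (h : |x| ≤ 1) :
    -(π/2) ≤ 2 * Real.arctan x ∧ 2 * Real.arctan x ≤ π/2 := by
  obtain ⟨h1, h2⟩ := abs_le.mp h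
  have hm1 : Real.arctan (-1) ≤ Real.arctan x := Real.arctan_strictMono.monotone h1
  have hm2 : Real.arctan x ≤ Real.arctan 1 := Real.arctan_strictMono.monotone h2
  rw [show ((-1:ℝ)) = -(1:ℝ) by ring, Real.arctan_neg, Real.arctan_one] at hm1
  rw [Real.arctan_one] at hm2
  constructor <;> linarith

private lemma tan_abs_le_one {x : ℝ} (h1 : -(π/4) ≤ x) (h2 : x ≤ π/4) :
    |Real.tan x| ≤ 1 := by
  have hpi := Real.pi_pos
  have hmem1 : x ∈ Set.Ioo (-(π/2)) (π/2) := ⟨by linarith, by linarith⟩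
  have hmem2 : (π/4 : ℝ) ∈ Set.Ioo (-(π/2)) (π/2) := ⟨by linarith, by linarith⟩
  have hmem3 : (-(π/4) : ℝ) ∈ Set.Ioo (-(π/2)) (π/2) := ⟨by linarith, by linarith⟩
  have ha := Real.strictMonoOn_tan.monotoneOn hmem3 hmem1 h1
  have hb := Real.strictMonoOn_tan.monotoneOn hmem1 hmem2 h2
  rw [Real.tan_neg, Real.tan_pi_div_four] at ha
  rw [Real.tan_pi_div_four] at hb
  rw [abs_le]
  exact ⟨by linarith, hb⟩

private lemma frac_c (sa ca sb cb : ℝ) (hca : ca ≠ 0) (hcb : cb ≠ 0)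
    (hB : 0 < ca^2*cb^2+sa^2*sb^2) :
    -(2*sa*ca*sb*cb) / (ca^2*cb^2+sa^2*sb^2)
      = -(2 * (sa/ca*(sb/cb)) / (1 + (sa/ca*(sb/cb))^2)) := by
  have h1 : (0:ℝ) < 1 + (sa/ca*(sb/cb))^2 := by positivity
  rw [neg_div, neg_eq_iff_eq_neg, neg_neg, div_eq_div_iff hB.ne' h1.ne']
  field_simp

private lemma frac_s (sa ca sb cb : ℝ) (hca : ca ≠ 0) (hsb : sb ≠ 0)
    (hB : 0 < sa^2*cb^2+ca^2*sb^2) :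
    (2*sa*ca*sb*cb) / (sa^2*cb^2+ca^2*sb^2)
      = 2 * (sa*cb/(ca*sb)) / (1 + (sa*cb/(ca*sb))^2) := by
  have h1 : (0:ℝ) < 1 + (sa*cb/(ca*sb))^2 := by positivity
  rw [div_eq_div_iff hB.ne' h1.ne']
  field_simp
  ring

set_option maxHeartbeats 1000000 in
/-- The weights `χ_c = −2 arcsin(C₋/C₊)` and `χ_s = 2 arcsin(S₋/S₊)` of the entangling
projections produced by the weighted Pauli-X measurements satisfy
`tan(χ_c/4) = tan(φ₁/4)·tan(φ₂/4)` and `tan(χ_s/4) = tan(φ₁/4)/tan(φ₂/4)`. -/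
theorem stmt8 (φ₁ φ₂ : ℝ)
    (hφ₁ : φ₁ ∈ Set.Icc (-Real.pi) Real.pi)
    (hφ₂ : φ₂ ∈ Set.Icc (-Real.pi) Real.pi) :
    |Cm φ₁ φ₂| ≤ Cp φ₁ φ₂ ∧ 0 < Cp φ₁ φ₂ ∧
    Real.tan (-2 * Real.arcsin (Cm φ₁ φ₂ / Cp φ₁ φ₂) / 4)
      = Real.tan (φ₁ / 4) * Real.tan (φ₂ / 4) ∧
    (φ₂ ≠ 0 → (φ₁, φ₂) ≠ (0, 0) →
      Real.sin ((φ₁ + φ₂) / 4) * Real.sin ((φ₁ - φ₂) / 4) ≤ 0 →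
      |Sm φ₁ φ₂| ≤ Sp φ₁ φ₂ ∧ 0 < Sp φ₁ φ₂ ∧
      Real.tan (2 * Real.arcsin (Sm φ₁ φ₂ / Sp φ₁ φ₂) / 4)
        = Real.tan (φ₁ / 4) / Real.tan (φ₂ / 4)) := by
  obtain ⟨h1l, h1r⟩ := hφ₁
  obtain ⟨h2l, h2r⟩ := hφ₂
  have hpi := Real.pi_pos
  have ha1 : -(π/2) < φ₁/4 := by linarith
  have ha2 : φ₁/4 < π/2 := by linarith
  have hb1 : -(π/2) < φ₂/4 := by linarith
  have hb2 : φ₂/4 < π/2 := by linarith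
  have hca : 0 < Real.cos (φ₁/4) := Real.cos_pos_of_mem_Ioo ⟨ha1, ha2⟩
  have hcb : 0 < Real.cos (φ₂/4) := Real.cos_pos_of_mem_Ioo ⟨hb1, hb2⟩
  set sa := Real.sin (φ₁/4) with hsa
  set ca := Real.cos (φ₁/4) with hca'
  set sb := Real.sin (φ₂/4) with hsb
  set cb := Real.cos (φ₂/4) with hcb'
  have hCp : Cp φ₁ φ₂ = ca^2*cb^2 + sa^2*sb^2 := by
    unfold Cp
    rw [show (φ₁+φ₂)/4 = φ₁/4 + φ₂/4 by ring, show (φ₁-φ₂)/4 = φ₁/4 - φ₂/4 by ring,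
      Real.cos_add, Real.cos_sub]
    ring
  have hCm : Cm φ₁ φ₂ = -(2*sa*ca*sb*cb) := by
    unfold Cm
    rw [show (φ₁+φ₂)/4 = φ₁/4 + φ₂/4 by ring, show (φ₁-φ₂)/4 = φ₁/4 - φ₂/4 by ring,
      Real.cos_add, Real.cos_sub]
    ring
  have hSp : Sp φ₁ φ₂ = sa^2*cb^2 + ca^2*sb^2 := by
    unfold Sp
    rw [show (φ₁+φ₂)/4 = φ₁/4 + φ₂/4 by ring, show (φ₁-φ₂)/4 = φ₁/4 - φ₂/4 by ring,
      Real.sin_add, Real.sin_sub]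
    ring
  have hSm : Sm φ₁ φ₂ = 2*sa*ca*sb*cb := by
    unfold Sm
    rw [show (φ₁+φ₂)/4 = φ₁/4 + φ₂/4 by ring, show (φ₁-φ₂)/4 = φ₁/4 - φ₂/4 by ring,
      Real.sin_add, Real.sin_sub]
    ring
  have hCpPos : 0 < Cp φ₁ φ₂ := by rw [hCp]; positivity
  have hta : Real.tan (φ₁/4) = sa / ca := Real.tan_eq_sin_div_cos _
  have htb : Real.tan (φ₂/4) = sb / cb := Real.tan_eq_sin_div_cos _
  refine ⟨?_, hCpPos, ?_, ?_⟩
  · rw [hCm, hCp, abs_le]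
    constructor <;> nlinarith [sq_nonneg (ca*cb - sa*sb), sq_nonneg (ca*cb + sa*sb)]
  · -- χ_c part
    set t := Real.tan (φ₁/4) * Real.tan (φ₂/4) with htdef
    have habs : |t| ≤ 1 := by
      rw [htdef, abs_mul]
      have h1 := tan_abs_le_one (x := φ₁/4) (by linarith) (by linarith)
      have h2 := tan_abs_le_one (x := φ₂/4) (by linarith) (by linarith)
      calc |Real.tan (φ₁/4)| * |Real.tan (φ₂/4)| ≤ 1 * 1 :=
        mul_le_mul h1 h2 (abs_nonneg _) zero_le_one
      _ = 1 := by ring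
    obtain ⟨hbd1, hbd2⟩ := arctan_bound habs
    have ht2 : (0:ℝ) < 1 + t^2 := by positivity
    have hBc : 0 < ca^2*cb^2 + sa^2*sb^2 := by positivity
    have hdiv : Cm φ₁ φ₂ / Cp φ₁ φ₂ = Real.sin (-(2 * Real.arctan t)) := by
      rw [Real.sin_neg, sin2arctan, hCm, hCp, htdef, hta, htb]
      exact frac_c sa ca sb cb hca.ne' hcb.ne' hBc
    rw [hdiv, Real.arcsin_sin (by linarith) (by linarith),
      show -2 * -(2 * Real.arctan t) / 4 = Real.arctan t by ring, Real.tan_arctan]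
  · -- χ_s part
    intro hφ₂ne _ hsign
    have hsbne : sb ≠ 0 := by
      intro h
      have : φ₂/4 = 0 := by
        have := Real.sin_eq_zero_iff_of_lt_of_lt (x := φ₂/4) (by linarith) (by linarith)
        exact this.mp h
      exact hφ₂ne (by linarith)
    have hSpPos : 0 < Sp φ₁ φ₂ := by
      rw [hSp]
      have : 0 < ca^2 * sb^2 := by positivity
      nlinarith [sq_nonneg (sa*cb)]
    have hsign' : (sa*cb + ca*sb) * (sa*cb - ca*sb) ≤ 0 := by
      rw [show (φ₁+φ₂)/4 = φ₁/4 + φ₂/4 by ring, show (φ₁-φ₂)/4 = φ₁/4 - φ₂/4 by ring,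
        Real.sin_add, Real.sin_sub] at hsign
      linarith [hsign]
    set u := Real.tan (φ₁/4) / Real.tan (φ₂/4) with hudef
    have hu : u = sa * cb / (ca * sb) := by
      rw [hudef, hta, htb]; field_simp
    have habs : |u| ≤ 1 := by
      rw [← sq_le_one_iff_abs_le_one, hu, div_pow, div_le_one (by positivity)]
      nlinarith [hsign']
    obtain ⟨hbd1, hbd2⟩ := arctan_bound habs
    have hu2 : (0:ℝ) < 1 + u^2 := by positivity
    have hBs : 0 < sa^2*cb^2 + ca^2*sb^2 := by positivity
    have hdiv : Sm φ₁ φ₂ / Sp φ₁ φ₂ = Real.sin (2 * Real.arctan u) := by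
      rw [sin2arctan, hSm, hSp, hu]
      exact frac_s sa ca sb cb hca.ne' hsbne hBs
    refine ⟨?_, hSpPos, ?_⟩
    · rw [hSm, hSp, abs_le]
      constructor <;> nlinarith [sq_nonneg (sa*cb - ca*sb), sq_nonneg (sa*cb + ca*sb)]
    · rw [hdiv, Real.arcsin_sin (by linarith) (by linarith),
        show 2 * (2 * Real.arctan u) / 4 = Real.arctan u by ring, Real.tan_arctan]
end

section
/- Let φ₁, φ₂ ∈ [−π, π]. With χ_c := −2·arcsin(C₋/C₊), one has √C₊·cos(χ_c/4) = (cos(φ₊/2) + cos(φ₋/2))/2 and √C₊·sin(χ_c/4) = −(cos(φ₊/2) − cos(φ₋/2))/2. Moreover, if (φ₁,φ₂) ≠ (0,0), then with χ_s := 2·arcsin(S₋/S₊) one has √S₊·cos(χ_s/4) = (|sin(φ₊/2)| + |sin(φ₋/2)|)/2 and √S₊·sin(χ_s/4) = (|sin(φ₊/2)| − |sin(φ₋/2)|)/2. -/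
private lemma stmt9_aux (a b : ℝ) (ha : 0 ≤ a) (hb : 0 ≤ b) (hab : 0 < a + b) :
    Real.sqrt ((a^2+b^2)/2) * Real.cos (Real.arcsin (((a^2-b^2)/2)/((a^2+b^2)/2)) / 2)
      = (a+b)/2 ∧
    Real.sqrt ((a^2+b^2)/2) * Real.sin (Real.arcsin (((a^2-b^2)/2)/((a^2+b^2)/2)) / 2)
      = (a-b)/2 := by
  have hP : 0 < (a^2+b^2)/2 := by nlinarith [mul_pos hab hab, sq_nonneg (a-b)]
  set P := (a^2+b^2)/2 with hPdef
  set M := (a^2-b^2)/2 with hMdef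
  set x := M / P with hxdef
  have hx1 : -1 ≤ x ∧ x ≤ 1 := by
    rw [hxdef]
    constructor
    · rw [le_div_iff₀ hP]; nlinarith
    · rw [div_le_one hP]; nlinarith
  have hπ := Real.pi_pos
  have hb1 := Real.neg_pi_div_two_le_arcsin x
  have hb2 := Real.arcsin_le_pi_div_two x
  have hcos : Real.cos (Real.arcsin x) = a*b/P := by
    rw [Real.cos_arcsin]
    have h1 : 1 - x^2 = (a*b/P)^2 := by
      have hD : a^2+b^2 ≠ 0 := by nlinarith [mul_pos hab hab, sq_nonneg (a-b)]
      rw [hxdef, hMdef, hPdef]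
      field_simp
      ring
    rw [h1, Real.sqrt_sq (by positivity)]
  have hhalf : Real.cos (Real.arcsin x / 2) = Real.sqrt ((1 + a*b/P)/2) := by
    rw [Real.cos_half (by linarith) (by linarith), hcos]
  have h1 : Real.sqrt P * Real.cos (Real.arcsin x / 2) = (a+b)/2 := by
    rw [hhalf, ← Real.sqrt_mul hP.le]
    have h2 : P * ((1 + a*b/P)/2) = ((a+b)/2)^2 := by
      field_simp
      ring
    rw [h2, Real.sqrt_sq (by positivity)]
  refine ⟨h1, ?_⟩
  have hx2 : x = 2 * Real.sin (Real.arcsin x / 2) * Real.cos (Real.arcsin x / 2) := by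
    rw [← Real.sin_two_mul]
    rw [show 2 * (Real.arcsin x / 2) = Real.arcsin x by ring]
    rw [Real.sin_arcsin hx1.1 hx1.2]
  have hsq : Real.sqrt P ^ 2 = P := Real.sq_sqrt hP.le
  have key : Real.sqrt P * Real.sin (Real.arcsin x / 2) * (a + b) = M := by
    have h3 : Real.sqrt P * Real.sin (Real.arcsin x / 2) * (a + b)
        = Real.sqrt P ^ 2 * (2 * Real.sin (Real.arcsin x / 2) * Real.cos (Real.arcsin x / 2)) := by
      linear_combination (-(2 * Real.sqrt P * Real.sin (Real.arcsin x / 2))) * h1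
    rw [h3, ← hx2, hsq, hxdef]
    field_simp
  have hM : M = (a-b)/2 * (a+b) := by rw [hMdef]; ring
  rw [hM] at key
  exact mul_right_cancel₀ (ne_of_gt hab) key

/-- Scalar identities expressing the decompositions `√C₊·EP̃(−χ_c) = cos(φ₊/2)P₊ + cos(φ₋/2)P₋`
and `√S₊·EP̃(χ_s) = |sin(φ₊/2)|P₊ − |sin(φ₋/2)|P₋`. -/
theorem stmt9 (φ₁ φ₂ : ℝ)
    (hφ₁ : φ₁ ∈ Set.Icc (-Real.pi) Real.pi)
    (hφ₂ : φ₂ ∈ Set.Icc (-Real.pi) Real.pi) :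
    Real.sqrt (Cp φ₁ φ₂) * Real.cos (-2 * Real.arcsin (Cm φ₁ φ₂ / Cp φ₁ φ₂) / 4)
      = (Real.cos ((φ₁ + φ₂) / 4) + Real.cos ((φ₁ - φ₂) / 4)) / 2 ∧
    Real.sqrt (Cp φ₁ φ₂) * Real.sin (-2 * Real.arcsin (Cm φ₁ φ₂ / Cp φ₁ φ₂) / 4)
      = -((Real.cos ((φ₁ + φ₂) / 4) - Real.cos ((φ₁ - φ₂) / 4)) / 2) ∧
    ((φ₁, φ₂) ≠ (0, 0) →
      Real.sqrt (Sp φ₁ φ₂) * Real.cos (2 * Real.arcsin (Sm φ₁ φ₂ / Sp φ₁ φ₂) / 4)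
        = (|Real.sin ((φ₁ + φ₂) / 4)| + |Real.sin ((φ₁ - φ₂) / 4)|) / 2 ∧
      Real.sqrt (Sp φ₁ φ₂) * Real.sin (2 * Real.arcsin (Sm φ₁ φ₂ / Sp φ₁ φ₂) / 4)
        = (|Real.sin ((φ₁ + φ₂) / 4)| - |Real.sin ((φ₁ - φ₂) / 4)|) / 2) := by
  have hπ := Real.pi_pos
  obtain ⟨h1a, h1b⟩ := hφ₁
  obtain ⟨h2a, h2b⟩ := hφ₂
  -- cosine part
  have ha : 0 ≤ Real.cos ((φ₁ + φ₂) / 4) :=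
    Real.cos_nonneg_of_mem_Icc ⟨by linarith, by linarith⟩
  have hb : 0 ≤ Real.cos ((φ₁ - φ₂) / 4) :=
    Real.cos_nonneg_of_mem_Icc ⟨by linarith, by linarith⟩
  have hab : 0 < Real.cos ((φ₁ + φ₂) / 4) + Real.cos ((φ₁ - φ₂) / 4) := by
    have hsum : Real.cos ((φ₁ + φ₂) / 4) + Real.cos ((φ₁ - φ₂) / 4)
        = 2 * Real.cos (φ₁ / 4) * Real.cos (φ₂ / 4) := by
      rw [Real.cos_add_cos]; ring_nf
    rw [hsum]
    have h1 : 0 < Real.cos (φ₁ / 4) :=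
      Real.cos_pos_of_mem_Ioo ⟨by linarith, by linarith⟩
    have h2 : 0 < Real.cos (φ₂ / 4) :=
      Real.cos_pos_of_mem_Ioo ⟨by linarith, by linarith⟩
    positivity
  obtain ⟨hc1, hc2⟩ := stmt9_aux _ _ ha hb hab
  have hang : ∀ t : ℝ, -2 * Real.arcsin t / 4 = -(Real.arcsin t / 2) := by
    intro t; ring
  refine ⟨?_, ?_, ?_⟩
  · rw [hang, Real.cos_neg]
    simpa [Cp, Cm] using hc1
  · rw [hang, Real.sin_neg]
    have := hc2
    simp only [Cp, Cm]
    rw [mul_neg]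
    rw [hc2]
  · intro hne
    have ha' : 0 ≤ |Real.sin ((φ₁ + φ₂) / 4)| := abs_nonneg _
    have hb' : 0 ≤ |Real.sin ((φ₁ - φ₂) / 4)| := abs_nonneg _
    have hab' : 0 < |Real.sin ((φ₁ + φ₂) / 4)| + |Real.sin ((φ₁ - φ₂) / 4)| := by
      by_contra h
      push_neg at h
      have hz1 : |Real.sin ((φ₁ + φ₂) / 4)| = 0 := le_antisymm (by linarith) ha'
      have hz2 : |Real.sin ((φ₁ - φ₂) / 4)| = 0 := le_antisymm (by linarith) hb'
      rw [abs_eq_zero] at hz1 hz2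
      rw [Real.sin_eq_zero_iff_of_lt_of_lt (by linarith) (by linarith)] at hz1
      rw [Real.sin_eq_zero_iff_of_lt_of_lt (by linarith) (by linarith)] at hz2
      apply hne
      have : φ₁ = 0 := by linarith
      have : φ₂ = 0 := by linarith
      simp_all
    obtain ⟨hs1, hs2⟩ := stmt9_aux _ _ ha' hb' hab'
    have hang2 : ∀ t : ℝ, 2 * Real.arcsin t / 4 = Real.arcsin t / 2 := by
      intro t; ring
    simp only [hang2]
    have hSp : Sp φ₁ φ₂ = (|Real.sin ((φ₁ + φ₂) / 4)| ^ 2 + |Real.sin ((φ₁ - φ₂) / 4)| ^ 2) / 2 := by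
      simp [Sp, sq_abs]
    have hSm : Sm φ₁ φ₂ = (|Real.sin ((φ₁ + φ₂) / 4)| ^ 2 - |Real.sin ((φ₁ - φ₂) / 4)| ^ 2) / 2 := by
      simp [Sm, sq_abs]
    rw [hSp, hSm]
    exact ⟨hs1, hs2⟩
end

section
/- Let φ ∈ [−π, π] with φ ≠ 0, let θ ∈ [0, π] be the unique angle with sin(θ/2) = |sin(φ/2)|/√2, and set r = log| sin((φ+θ)/2) / sin((φ−θ)/2) | (the denominator is nonzero). Then cosh(r/2) = √(1 + cos²(φ/2)). -/
/-- For the weighted Pauli-Y measurement angle `θ` with `sin(θ/2) = |sin(φ/2)|/√2`, the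
normalization of the local non-unitary operator satisfies `cosh(r/2) = √(1 + cos²(φ/2))`. -/
theorem stmt10 (φ θ : ℝ)
    (hφ : φ ∈ Set.Icc (-Real.pi) Real.pi) (hφ0 : φ ≠ 0)
    (hθ : θ ∈ Set.Icc 0 Real.pi)
    (hsin : Real.sin (θ / 2) = |Real.sin (φ / 2)| / Real.sqrt 2) :
    Real.sin ((φ - θ) / 2) ≠ 0 ∧
    Real.cosh (Real.log |Real.sin ((φ + θ) / 2) / Real.sin ((φ - θ) / 2)| / 2)
      = Real.sqrt (1 + Real.cos (φ / 2) ^ 2) := by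
  obtain ⟨hφl, hφr⟩ := hφ
  obtain ⟨hθl, hθr⟩ := hθ
  have hpi := Real.pi_pos
  set s := Real.sin (φ / 2) with hsdef
  set c := Real.cos (φ / 2) with hcdef
  have hs : s ≠ 0 := by
    intro h
    have := (Real.sin_eq_zero_iff_of_lt_of_lt (x := φ / 2)
      (by linarith) (by linarith)).mp h
    exact hφ0 (by linarith)
  have hsc : s ^ 2 + c ^ 2 = 1 := Real.sin_sq_add_cos_sq _
  have hS2 : Real.sin (θ / 2) ^ 2 = s ^ 2 / 2 := by
    rw [hsin, div_pow, sq_abs, Real.sq_sqrt (by norm_num : (0:ℝ) ≤ 2)]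
  have hC2 : Real.cos (θ / 2) ^ 2 = 1 - s ^ 2 / 2 := by
    have := Real.sin_sq_add_cos_sq (θ / 2); linarith
  have ha : Real.sin ((φ + θ) / 2) = s * Real.cos (θ / 2) + c * Real.sin (θ / 2) := by
    rw [show (φ + θ) / 2 = φ / 2 + θ / 2 by ring, Real.sin_add]
  have hb : Real.sin ((φ - θ) / 2) = s * Real.cos (θ / 2) - c * Real.sin (θ / 2) := by
    rw [show (φ - θ) / 2 = φ / 2 - θ / 2 by ring, Real.sin_sub]
  set a := Real.sin ((φ + θ) / 2) with hadef
  set b := Real.sin ((φ - θ) / 2) with hbdef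
  have hab : a * b = s ^ 2 / 2 := by
    rw [ha, hb]
    linear_combination s ^ 2 * hC2 - c ^ 2 * hS2 - s ^ 2 / 2 * hsc
  have hs2 : 0 < s ^ 2 := by positivity
  have habpos : 0 < a * b := by rw [hab]; linarith
  have hbne : b ≠ 0 := by
    intro h; rw [h, mul_zero] at habpos; exact lt_irrefl 0 habpos
  have hane : a ≠ 0 := by
    intro h; rw [h, zero_mul] at habpos; exact lt_irrefl 0 habpos
  refine ⟨hbne, ?_⟩
  have hdivpos : 0 < a / b := by
    rcases mul_pos_iff.mp habpos with ⟨ha0, hb0⟩ | ⟨ha0, hb0⟩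
    · exact div_pos ha0 hb0
    · exact div_pos_of_neg_of_neg ha0 hb0
  have habs : |a / b| = a / b := abs_of_pos hdivpos
  have hsum : a ^ 2 + b ^ 2 = s ^ 2 * (1 + 2 * c ^ 2) := by
    rw [ha, hb]
    linear_combination 2 * s ^ 2 * hC2 + 2 * c ^ 2 * hS2 - s ^ 2 * hsc
  have hcr : Real.cosh (Real.log |a / b|) = 1 + 2 * c ^ 2 := by
    rw [habs, Real.cosh_log hdivpos, inv_div]
    field_simp
    linear_combination hsum - (2 + 4 * c ^ 2) * hab
  have h1 : Real.cosh (Real.log |a / b| / 2) ^ 2 = 1 + c ^ 2 := by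
    have h2 := Real.cosh_two_mul (Real.log |a / b| / 2)
    rw [show 2 * (Real.log |a / b| / 2) = Real.log |a / b| by ring, hcr] at h2
    have h3 := Real.sinh_sq (Real.log |a / b| / 2)
    linarith
  rw [← h1]
  exact (Real.sqrt_sq (le_of_lt (Real.cosh_pos _))).symm
end

section
/- Let φ ∈ [−π, π] with φ ≠ 0, let θ ∈ [0, π] be the unique angle with sin(θ/2) = |sin(φ/2)|/√2, and set r = log| sin((φ+θ)/2) / sin((φ−θ)/2) |. Then tanh(r/4) = sgn(φ)·cos(φ/2) / (√(1 + cos²(φ/2)) + 1). -/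
lemma tanh_log_sq (y : ℝ) (hy : 0 < y) :
    Real.tanh (Real.log (y ^ 2) / 4) = (y - 1) / (y + 1) := by
  have h2 : Real.log (y ^ 2) = 2 * Real.log y := by
    rw [Real.log_pow]; push_cast; ring
  set E := Real.exp (Real.log (y ^ 2) / 4) with hEdef
  have hEpos : 0 < E := Real.exp_pos _
  have hE : E ^ 2 = y := by
    rw [hEdef, pow_two, ← Real.exp_add, h2,
      show 2 * Real.log y / 4 + 2 * Real.log y / 4 = Real.log y by ring,
      Real.exp_log hy]
  have hneg : Real.exp (-(Real.log (y ^ 2) / 4)) = 1 / E := by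
    rw [Real.exp_neg, one_div]
  rw [Real.tanh_eq_sinh_div_cosh, Real.sinh_eq, Real.cosh_eq, hneg, ← hEdef, ← hE]
  have h1 : (0:ℝ) < E ^ 2 + 1 := by positivity
  field_simp

set_option maxHeartbeats 1000000 in
/-- For the weighted Pauli-Y measurement angle `θ` with `sin(θ/2) = |sin(φ/2)|/√2`, the
quantity `tanh(r/4)` determining the subsequent measurement bases satisfies
`tanh(r/4) = sgn(φ)·cos(φ/2)/(√(1 + cos²(φ/2)) + 1)`. -/
theorem stmt11 (φ θ : ℝ)
    (hφ : φ ∈ Set.Icc (-Real.pi) Real.pi) (hφ0 : φ ≠ 0)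
    (hθ : θ ∈ Set.Icc 0 Real.pi)
    (hsin : Real.sin (θ / 2) = |Real.sin (φ / 2)| / Real.sqrt 2) :
    Real.tanh (Real.log |Real.sin ((φ + θ) / 2) / Real.sin ((φ - θ) / 2)| / 4)
      = Real.sign φ * Real.cos (φ / 2) / (Real.sqrt (1 + Real.cos (φ / 2) ^ 2) + 1) := by
  obtain ⟨hφl, hφr⟩ := hφ
  obtain ⟨hθl, hθr⟩ := hθ
  have hπ : (0:ℝ) < Real.pi := Real.pi_pos
  set s := Real.sin (φ / 2) with hsdef
  set c := Real.cos (φ / 2) with hcdef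
  set ε := Real.sign φ with hεdef
  set s2 := Real.sqrt 2 with hs2def
  have hs2pos : 0 < s2 := by rw [hs2def]; positivity
  have hs2 : s2 ^ 2 = 2 := Real.sq_sqrt (by norm_num)
  -- sign facts
  obtain ⟨hεs, hsne'⟩ : ε * s = |s| ∧ s ≠ 0 := by
    rcases hφ0.lt_or_gt with h | h
    · have hsneg : s < 0 := by
        have h1 : 0 < Real.sin (-φ / 2) :=
          Real.sin_pos_of_pos_of_lt_pi (by linarith) (by linarith)
        have h2 : s = -Real.sin (-φ / 2) := by
          rw [hsdef, show φ / 2 = -(-φ / 2) by ring, Real.sin_neg]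
        linarith
      constructor
      · rw [hεdef, Real.sign_of_neg h, abs_of_neg hsneg]; ring
      · exact ne_of_lt hsneg
    · have hspos : 0 < s := by
        rw [hsdef]
        exact Real.sin_pos_of_pos_of_lt_pi (by linarith) (by linarith)
      constructor
      · rw [hεdef, Real.sign_of_pos h, abs_of_pos hspos]; ring
      · exact ne_of_gt hspos
  have hε2 : ε ^ 2 = 1 := by
    rcases hφ0.lt_or_gt with h | h
    · rw [hεdef, Real.sign_of_neg h]; norm_num
    · rw [hεdef, Real.sign_of_pos h]; norm_num
  have hεne : ε ≠ 0 := by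
    intro h; rw [h] at hε2; norm_num at hε2
  obtain ⟨m, hm⟩ : ∃ m, |s| = m := ⟨_, rfl⟩
  rw [hm] at hεs hsin
  have hsval : s = ε * m := by
    rw [← hεs, ← mul_assoc, ← pow_two, hε2, one_mul]
  -- v facts
  set v := Real.cos (θ / 2) with hvdef
  have hsc : s ^ 2 + c ^ 2 = 1 := Real.sin_sq_add_cos_sq _
  have hv0 : 0 ≤ v := Real.cos_nonneg_of_mem_Icc ⟨by linarith, by linarith⟩
  have hsinsq : Real.sin (θ / 2) ^ 2 = s ^ 2 / 2 := by
    rw [hsin, div_pow, hs2, ← hm, sq_abs]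
  have hv2 : v ^ 2 = (1 + c ^ 2) / 2 := by
    have := Real.sin_sq_add_cos_sq (θ / 2)
    rw [hsinsq] at this
    rw [← hvdef] at this
    nlinarith
  have hvpos : 0 < v := by nlinarith [sq_nonneg c]
  -- u facts
  set u := ε * c / s2 with hudef
  have hu2 : u ^ 2 = c ^ 2 / 2 := by
    rw [hudef, div_pow, mul_pow, hε2, hs2, one_mul]
  have hvu : v ^ 2 - u ^ 2 = 1 / 2 := by rw [hv2, hu2]; ring
  have habsu : |u| < v := by
    have h1 : u ^ 2 < v ^ 2 := by nlinarith
    have h2 : |u| ^ 2 < v ^ 2 := by rwa [sq_abs]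
    nlinarith [abs_nonneg u]
  have hvmu : 0 < v - u := by
    have := le_abs_self u
    linarith
  have hvpu : 0 < v + u := by
    have := neg_abs_le u
    linarith
  -- sqrt(1+c^2) = s2 * v
  have hκ : Real.sqrt (1 + c ^ 2) = s2 * v := by
    rw [show 1 + c ^ 2 = 2 * v ^ 2 by rw [hv2]; ring, show (2:ℝ) = s2 ^ 2 from hs2.symm,
      show s2 ^ 2 * v ^ 2 = (s2 * v) ^ 2 by ring, Real.sqrt_sq (by positivity)]
  -- X, Y
  have hX : Real.sin ((φ + θ) / 2) = ε * m * (v + u) := by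
    rw [show (φ + θ) / 2 = φ / 2 + θ / 2 by ring, Real.sin_add, ← hsdef, ← hcdef, ← hvdef,
      hsin, hsval, hudef]
    field_simp
    linear_combination (-(c * m)) * hε2
  have hY : Real.sin ((φ - θ) / 2) = ε * m * (v - u) := by
    rw [show (φ - θ) / 2 = φ / 2 - θ / 2 by ring, Real.sin_sub, ← hsdef, ← hcdef, ← hvdef,
      hsin, hsval, hudef]
    field_simp
    linear_combination (c * m) * hε2
  have hsne : m ≠ 0 := by rw [← hm]; exact abs_ne_zero.mpr hsne'
  have hXY : Real.sin ((φ + θ) / 2) / Real.sin ((φ - θ) / 2) = (v + u) / (v - u) := by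
    rw [hX, hY, mul_div_mul_left _ _ (mul_ne_zero hεne hsne)]
  have habs : |Real.sin ((φ + θ) / 2) / Real.sin ((φ - θ) / 2)| = (v + u) / (v - u) := by
    rw [hXY, abs_of_pos (div_pos hvpu hvmu)]
  clear_value s c ε s2 v u
  -- T
  set T := ε * c / (Real.sqrt (1 + c ^ 2) + 1) with hTdef
  have hden : 0 < s2 * v + 1 := by positivity
  have hTval : T = u * s2 / (s2 * v + 1) := by
    rw [hTdef, hκ, hudef]
    field_simp
  have hus2 : |u * s2| < s2 * v := by
    rw [abs_mul, abs_of_pos hs2pos]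
    calc |u| * s2 < v * s2 := by exact mul_lt_mul_of_pos_right habsu hs2pos
    _ = s2 * v := by ring
  have hT1 : T < 1 := by
    rw [hTval, div_lt_one hden]
    have := le_abs_self (u * s2)
    linarith
  have hT2 : -1 < T := by
    rw [hTval, lt_div_iff₀ hden]
    have := neg_abs_le (u * s2)
    linarith
  have hypos : 0 < (1 + T) / (1 - T) := div_pos (by linarith) (by linarith)
  have hq : (0:ℝ) < s2 * v + 1 - u * s2 := by
    have := le_abs_self (u * s2)
    linarith
  have key : |Real.sin ((φ + θ) / 2) / Real.sin ((φ - θ) / 2)| = ((1 + T) / (1 - T)) ^ 2 := by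
    rw [habs, hTval]
    have hAne : s2 * v + 1 ≠ 0 := ne_of_gt hden
    have hBne : s2 * v + 1 - u * s2 ≠ 0 := ne_of_gt hq
    have hinner : (1 + u * s2 / (s2 * v + 1)) / (1 - u * s2 / (s2 * v + 1))
        = (s2 * v + 1 + u * s2) / (s2 * v + 1 - u * s2) := by
      rw [show 1 + u * s2 / (s2 * v + 1) = (s2 * v + 1 + u * s2) / (s2 * v + 1) by
            field_simp,
          show 1 - u * s2 / (s2 * v + 1) = (s2 * v + 1 - u * s2) / (s2 * v + 1) by
            field_simp,
          div_div_div_eq, mul_comm (s2 * v + 1 + u * s2) (s2 * v + 1), mul_div_mul_left _ _ hAne]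
    rw [hinner, div_pow, div_eq_div_iff (ne_of_gt hvmu) (by positivity)]
    linear_combination (-2 * u * s2 ^ 2) * hvu + (-u) * hs2
  rw [key, tanh_log_sq _ hypos]
  have h1T : (1:ℝ) - T ≠ 0 := by linarith
  field_simp
  ring
end

section
/- Let φ ∈ (−π, π) with φ ≠ 0, let θ' ∈ [0, π] be the unique angle with sin(θ'/2) = √( |sin(φ/2)|·(1 + |sin(φ/2)|)/2 ), and set r' = log| sin((φ+θ')/2) / sin((φ−θ')/2) | (the denominator is nonzero). Then cosh(r'/2) = 1 + |sin(φ/2)|. -/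
set_option maxHeartbeats 1000000


/-- For the `X_{w₊}⁺`-basis measurement angle `θ'` with
`sin(θ'/2) = √(|sin(φ/2)|(1+|sin(φ/2)|)/2)`, the normalization of the local non-unitary
operator satisfies `cosh(r'/2) = 1 + |sin(φ/2)|`. -/
theorem stmt12 (φ θ' : ℝ)
    (hφ : φ ∈ Set.Ioo (-Real.pi) Real.pi) (hφ0 : φ ≠ 0)
    (hθ : θ' ∈ Set.Icc 0 Real.pi)
    (hsin : Real.sin (θ' / 2)
      = Real.sqrt (|Real.sin (φ / 2)| * (1 + |Real.sin (φ / 2)|) / 2)) :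
    Real.sin ((φ - θ') / 2) ≠ 0 ∧
    Real.cosh (Real.log |Real.sin ((φ + θ') / 2) / Real.sin ((φ - θ') / 2)| / 2)
      = 1 + |Real.sin (φ / 2)| := by
  obtain ⟨hφ1, hφ2⟩ := hφ
  obtain ⟨hθ1, hθ2⟩ := hθ
  have hpi := Real.pi_pos
  set s := |Real.sin (φ / 2)| with hs
  set sc := Real.sin (φ / 2) with hsc
  set cφ := Real.cos (φ / 2) with hcφ
  set st := Real.sin (θ' / 2) with hstdef
  set ct := Real.cos (θ' / 2) with hctdef
  set A := Real.sin ((φ + θ') / 2) with hAdef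
  set B := Real.sin ((φ - θ') / 2) with hBdef
  have hsq : sc ^ 2 = s ^ 2 := (sq_abs sc).symm
  have hpyth := Real.sin_sq_add_cos_sq (φ / 2)
  have hcos2 : cφ ^ 2 = 1 - s ^ 2 := by
    rw [← hsc, ← hcφ] at hpyth; linarith
  have hc0 : 0 < cφ := Real.cos_pos_of_mem_Ioo ⟨by linarith, by linarith⟩
  have hsφ : sc ≠ 0 := by
    rcases lt_trichotomy φ 0 with h | h | h
    · have hneg : 0 < Real.sin (-(φ/2)) :=
        Real.sin_pos_of_pos_of_lt_pi (by linarith) (by linarith)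
      rw [Real.sin_neg] at hneg
      intro hcontra; rw [← hsc] at hneg; rw [hcontra] at hneg; simp at hneg
    · exact absurd h hφ0
    · exact (Real.sin_pos_of_pos_of_lt_pi (by linarith) (by linarith)).ne'
  have hs0 : 0 < s := abs_pos.2 hsφ
  have hs1 : s < 1 := by nlinarith
  have hst2 : st ^ 2 = s * (1 + s) / 2 := by
    rw [hsin]; exact Real.sq_sqrt (by positivity)
  have hct2 : ct ^ 2 = 1 - st ^ 2 := by
    have h2 := Real.sin_sq_add_cos_sq (θ' / 2)
    rw [← hstdef, ← hctdef] at h2; linarith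
  have hA : A = sc * ct + cφ * st := by
    rw [hAdef, show (φ + θ') / 2 = φ / 2 + θ' / 2 by ring, Real.sin_add]
  have hB : B = sc * ct - cφ * st := by
    rw [hBdef, show (φ - θ') / 2 = φ / 2 - θ' / 2 by ring, Real.sin_sub]
  have hAB : A * B = (s ^ 2 - s) / 2 := by
    rw [hA, hB]
    linear_combination ct ^ 2 * hsq + s ^ 2 * hct2 - st ^ 2 * hcos2 - hst2
  have hABneg : A * B < 0 := by rw [hAB]; nlinarith
  have hBne : B ≠ 0 := by intro h; rw [h, mul_zero] at hABneg; linarith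
  have hAne : A ≠ 0 := by intro h; rw [h, zero_mul] at hABneg; linarith
  refine ⟨hBne, ?_⟩
  have hA2B2 : A ^ 2 + B ^ 2 = -2 * s ^ 4 - 2 * s ^ 3 + 3 * s ^ 2 + s := by
    rw [hA, hB]
    linear_combination 2 * ct ^ 2 * hsq + 2 * s ^ 2 * hct2 + 2 * st ^ 2 * hcos2
      + (2 - 4 * s ^ 2) * hst2
  set p := |A| with hp
  set q := |B| with hq
  have hp0 : 0 < p := abs_pos.2 hAne
  have hq0 : 0 < q := abs_pos.2 hBne
  have hp2 : p ^ 2 = A ^ 2 := sq_abs A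
  have hq2 : q ^ 2 = B ^ 2 := sq_abs B
  have hpq : p * q = (s - s ^ 2) / 2 := by
    rw [hp, hq, ← abs_mul, abs_of_neg hABneg, hAB]; ring
  have key : (p + q) ^ 2 = 4 * (1 + s) ^ 2 * (p * q) := by
    linear_combination hp2 + hq2 + hA2B2 + (2 - 4 * (1 + s) ^ 2) * hpq
  set t := Real.log |A / B| / 2 with ht
  set e := Real.exp t with he
  have he0 : 0 < e := Real.exp_pos t
  have habs : (0:ℝ) < |A / B| := abs_pos.2 (div_ne_zero hAne hBne)
  have he2 : e ^ 2 * q = p := by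
    have h1 : e ^ 2 = p / q := by
      rw [he, sq, ← Real.exp_add, ht, add_halves, Real.exp_log habs, abs_div]
    rw [h1]; field_simp
  have hgoal2 : q ^ 2 * ((e ^ 2 + 1) ^ 2) = q ^ 2 * ((2 * e) ^ 2 * (1 + s) ^ 2) := by
    linear_combination (e ^ 2 * q + p + 2 * q - 4 * (1 + s) ^ 2 * q) * he2 + key
  have hgoal2' : (e ^ 2 + 1) ^ 2 = (2 * e) ^ 2 * (1 + s) ^ 2 :=
    mul_left_cancel₀ (by positivity) hgoal2
  have hcosh : Real.cosh t = (e + e⁻¹) / 2 := by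
    rw [Real.cosh_eq, Real.exp_neg]
  rw [hcosh]
  have hXsq : ((e + e⁻¹) / 2) ^ 2 = (1 + s) ^ 2 := by
    have hene : e ≠ 0 := ne_of_gt he0
    field_simp
    linear_combination hgoal2'
  have hXnn : 0 ≤ (e + e⁻¹) / 2 := by positivity
  calc (e + e⁻¹) / 2 = Real.sqrt (((e + e⁻¹) / 2) ^ 2) := (Real.sqrt_sq hXnn).symm
    _ = Real.sqrt ((1 + s) ^ 2) := by rw [hXsq]
    _ = 1 + s := Real.sqrt_sq (by positivity)
end

section
/- Let φ₁, φ₂ ∈ [−π, π] with (φ₁, φ₂) ≠ (0, 0). Then S₊ > 0 and −|cos(φ₊/2)| ≤ S₋/S₊ ≤ |cos(φ₋/2)|. -/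
/-- `−|cos(φ₊/2)| ≤ S₋/S₊ ≤ |cos(φ₋/2)|`, guaranteeing existence of the X-type weighted
Pauli measurement angles. -/
theorem stmt13 (φ₁ φ₂ : ℝ)
    (hφ₁ : φ₁ ∈ Set.Icc (-Real.pi) Real.pi)
    (hφ₂ : φ₂ ∈ Set.Icc (-Real.pi) Real.pi)
    (hne : (φ₁, φ₂) ≠ (0, 0)) :
    0 < Sp φ₁ φ₂ ∧
    -|Real.cos ((φ₁ + φ₂) / 4)| ≤ Sm φ₁ φ₂ / Sp φ₁ φ₂ ∧
    Sm φ₁ φ₂ / Sp φ₁ φ₂ ≤ |Real.cos ((φ₁ - φ₂) / 4)| := by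
  obtain ⟨h1l, h1r⟩ := hφ₁
  obtain ⟨h2l, h2r⟩ := hφ₂
  have hpi := Real.pi_pos
  set a := (φ₁ + φ₂) / 4 with ha
  set b := (φ₁ - φ₂) / 4 with hb
  have hSp : 0 < Sp φ₁ φ₂ := by
    rcases lt_or_ge 0 (Real.sin a ^ 2 + Real.sin b ^ 2) with h | h
    · unfold Sp; linarith
    · exfalso
      have hsa : Real.sin a = 0 := by nlinarith [sq_nonneg (Real.sin a), sq_nonneg (Real.sin b)]
      have hsb : Real.sin b = 0 := by nlinarith [sq_nonneg (Real.sin a), sq_nonneg (Real.sin b)]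
      have haz : a = 0 := by
        rwa [Real.sin_eq_zero_iff_of_lt_of_lt (by simp [ha]; linarith) (by simp [ha]; linarith)] at hsa
      have hbz : b = 0 := by
        rwa [Real.sin_eq_zero_iff_of_lt_of_lt (by simp [hb]; linarith) (by simp [hb]; linarith)] at hsb
      apply hne
      simp only [ha, hb] at haz hbz
      have : φ₁ = 0 := by linarith
      have : φ₂ = 0 := by linarith
      simp_all
  refine ⟨hSp, ?_, ?_⟩
  · rw [le_div_iff₀ hSp]
    have hs : Real.sin a ^ 2 + Real.cos a ^ 2 = 1 := Real.sin_sq_add_cos_sq a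
    have ht2 : |Real.cos a| ^ 2 = Real.cos a ^ 2 := sq_abs _
    have ht0 : 0 ≤ |Real.cos a| := abs_nonneg _
    have ht1 : |Real.cos a| ≤ 1 := Real.abs_cos_le_one a
    have hd1 : Real.sin b ^ 2 ≤ 1 := Real.sin_sq_le_one b
    have key : 0 ≤ (1 - |Real.cos a|) * ((1 + |Real.cos a|) ^ 2 - Real.sin b ^ 2) := by
      apply mul_nonneg (by linarith); nlinarith
    unfold Sm Sp
    nlinarith [key, sq_nonneg (Real.sin a), sq_nonneg (Real.sin b)]
  · rw [div_le_iff₀ hSp]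
    have hs : Real.sin b ^ 2 + Real.cos b ^ 2 = 1 := Real.sin_sq_add_cos_sq b
    have ht2 : |Real.cos b| ^ 2 = Real.cos b ^ 2 := sq_abs _
    have ht0 : 0 ≤ |Real.cos b| := abs_nonneg _
    have ht1 : |Real.cos b| ≤ 1 := Real.abs_cos_le_one b
    have hc1 : Real.sin a ^ 2 ≤ 1 := Real.sin_sq_le_one a
    have key : 0 ≤ (1 - |Real.cos b|) * ((1 + |Real.cos b|) ^ 2 - Real.sin a ^ 2) := by
      apply mul_nonneg (by linarith); nlinarith
    unfold Sm Sp
    nlinarith [key, sq_nonneg (Real.sin a), sq_nonneg (Real.sin b)]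
end

section
/- Let φ₁, φ₂ ∈ [−π, π]. Then C₊ > 0 and −|sin(φ₊/2)| ≤ C₋/C₊ ≤ |sin(φ₋/2)|. -/
/-- `−|sin(φ₊/2)| ≤ C₋/C₊ ≤ |sin(φ₋/2)|`, guaranteeing existence of the X-type weighted
Pauli measurement angles. -/
theorem stmt14 (φ₁ φ₂ : ℝ)
    (hφ₁ : φ₁ ∈ Set.Icc (-Real.pi) Real.pi)
    (hφ₂ : φ₂ ∈ Set.Icc (-Real.pi) Real.pi) :
    0 < Cp φ₁ φ₂ ∧
    -|Real.sin ((φ₁ + φ₂) / 4)| ≤ Cm φ₁ φ₂ / Cp φ₁ φ₂ ∧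
    Cm φ₁ φ₂ / Cp φ₁ φ₂ ≤ |Real.sin ((φ₁ - φ₂) / 4)| := by
  obtain ⟨h1l, h1r⟩ := hφ₁
  obtain ⟨h2l, h2r⟩ := hφ₂
  set a := (φ₁ + φ₂) / 4 with ha
  set b := (φ₁ - φ₂) / 4 with hb
  have hcos1 : 0 ≤ Real.cos (a + b) := by
    apply Real.cos_nonneg_of_mem_Icc
    constructor <;> [skip; skip] <;> rw [ha, hb] <;> nlinarith [Real.pi_pos]
  have hcos2 : 0 ≤ Real.cos (a - b) := by
    apply Real.cos_nonneg_of_mem_Icc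
    constructor <;> [skip; skip] <;> rw [ha, hb] <;> nlinarith [Real.pi_pos]
  rw [Real.cos_add] at hcos1
  rw [Real.cos_sub] at hcos2
  have pa := Real.sin_sq_add_cos_sq a
  have pb := Real.sin_sq_add_cos_sq b
  have hCp : 0 < Cp φ₁ φ₂ := by
    unfold Cp
    nlinarith [mul_nonneg hcos1 hcos2]
  refine ⟨hCp, ?_, ?_⟩
  · rw [le_div_iff₀ hCp]
    have ht : |Real.sin a| ≤ 1 := abs_le.2 ⟨Real.neg_one_le_sin _, Real.sin_le_one _⟩
    have ht0 : 0 ≤ |Real.sin a| := abs_nonneg _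
    have ht2 : |Real.sin a| ^ 2 = Real.sin a ^ 2 := sq_abs _
    unfold Cm Cp
    nlinarith [sq_nonneg (Real.sin b), mul_nonneg (mul_nonneg ht0 ht0) ht0,
      mul_nonneg (sub_nonneg.2 ht) (sq_nonneg (Real.sin b)),
      mul_nonneg (mul_nonneg ht0 (sub_nonneg.2 ht)) ht0]
  · rw [div_le_iff₀ hCp]
    have ht : |Real.sin b| ≤ 1 := abs_le.2 ⟨Real.neg_one_le_sin _, Real.sin_le_one _⟩
    have ht0 : 0 ≤ |Real.sin b| := abs_nonneg _
    have ht2 : |Real.sin b| ^ 2 = Real.sin b ^ 2 := sq_abs _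
    unfold Cm Cp
    nlinarith [sq_nonneg (Real.sin a), mul_nonneg (mul_nonneg ht0 ht0) ht0,
      mul_nonneg (sub_nonneg.2 ht) (sq_nonneg (Real.sin a)),
      mul_nonneg (mul_nonneg ht0 (sub_nonneg.2 ht)) ht0]
end

section
/- For every real φ with 0 < |φ| ≤ π and every natural number k ≥ 1, one has 1 − (1 − sin⁸(φ/2)/(32·(1 + cos²(φ/2))))^k ≥ 1 − exp(−k·φ⁸/(64·π⁸)). -/
/-- Lower bound on the success probability `D_k` of the near-deterministic MEP generation. -/
theorem stmt16 (φ : ℝ) (h0 : 0 < |φ|) (hπ : |φ| ≤ Real.pi) (k : ℕ) (hk : 1 ≤ k) :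
    1 - (1 - Real.sin (φ / 2) ^ 8 / (32 * (1 + Real.cos (φ / 2) ^ 2))) ^ k
      ≥ 1 - Real.exp (-(k : ℝ) * φ ^ 8 / (64 * Real.pi ^ 8)) := by
  have hπpos := Real.pi_pos
  set p : ℝ := Real.sin (φ / 2) ^ 8 / (32 * (1 + Real.cos (φ / 2) ^ 2)) with hp
  -- Jordan: |φ|/π ≤ sin(|φ|/2)
  have hj : |φ| / Real.pi ≤ Real.sin (|φ| / 2) := by
    have h := Real.mul_le_sin (x := |φ| / 2) (by positivity) (by linarith)
    have heq : 2 / Real.pi * (|φ| / 2) = |φ| / Real.pi := by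
      field_simp
    linarith
  have hsin8 : Real.sin (φ / 2) ^ 8 = Real.sin (|φ| / 2) ^ 8 := by
    rcases abs_cases φ with ⟨h, _⟩ | ⟨h, _⟩
    · rw [h]
    · rw [h]; rw [show -φ / 2 = -(φ/2) by ring, Real.sin_neg]; ring
  have hs : (|φ| / Real.pi) ^ 8 ≤ Real.sin (φ / 2) ^ 8 := by
    rw [hsin8]
    exact pow_le_pow_left₀ (by positivity) hj 8
  have hφ8 : |φ| ^ 8 = φ ^ 8 := by
    rcases abs_cases φ with ⟨h, _⟩ | ⟨h, _⟩ <;> rw [h] <;> ring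
  have hcos2 : Real.cos (φ / 2) ^ 2 ≤ 1 := Real.cos_sq_le_one _
  have hcos0 : (0:ℝ) ≤ Real.cos (φ / 2) ^ 2 := sq_nonneg _
  have hsin1 : Real.sin (φ / 2) ^ 8 ≤ 1 := by
    have h := Real.sin_sq_le_one (φ / 2)
    calc Real.sin (φ / 2) ^ 8 = (Real.sin (φ / 2) ^ 2) ^ 4 := by ring
      _ ≤ 1 ^ 4 := pow_le_pow_left₀ (sq_nonneg _) h 4
      _ = 1 := one_pow 4
  have hsn : (0:ℝ) ≤ Real.sin (φ / 2) ^ 8 := by positivity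
  -- p ≤ 1
  have hp1 : p ≤ 1 := by
    rw [hp]
    rw [div_le_one (by positivity)]
    nlinarith
  -- p ≥ φ^8 / (64 π^8)
  have hpc : φ ^ 8 / (64 * Real.pi ^ 8) ≤ p := by
    rw [hp]
    rw [div_le_div_iff₀ (by positivity) (by positivity)]
    have h1 : φ ^ 8 / Real.pi ^ 8 ≤ Real.sin (φ / 2) ^ 8 := by
      calc φ ^ 8 / Real.pi ^ 8 = (|φ| / Real.pi) ^ 8 := by rw [div_pow, hφ8]
        _ ≤ _ := hs
    have h2 : φ ^ 8 ≤ Real.sin (φ / 2) ^ 8 * Real.pi ^ 8 := by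
      rw [div_le_iff₀ (by positivity)] at h1; linarith
    nlinarith [mul_nonneg (show (0:ℝ) ≤ φ ^ 8 by positivity)
      (show (0:ℝ) ≤ 1 - Real.cos (φ / 2) ^ 2 by linarith), h2, pow_pos hπpos 8]
  have hp0 : 0 ≤ p := by rw [hp]; positivity
  -- (1-p)^k ≤ exp(-p*k) ≤ exp(-c*k)
  have h1 : (1 - p) ^ k ≤ Real.exp (-p) ^ k := by
    apply pow_le_pow_left₀ (by linarith)
    linarith [Real.add_one_le_exp (-p)]
  have h2 : Real.exp (-p) ^ k = Real.exp (-(p * k)) := by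
    rw [← Real.exp_nat_mul]; ring_nf
  have h3 : Real.exp (-(p * k)) ≤ Real.exp (-(k : ℝ) * φ ^ 8 / (64 * Real.pi ^ 8)) := by
    apply Real.exp_le_exp.2
    have hk0 : (0:ℝ) ≤ k := Nat.cast_nonneg k
    rw [neg_mul, neg_div]
    have : (k:ℝ) * (φ ^ 8 / (64 * Real.pi ^ 8)) ≤ k * p := by
      exact mul_le_mul_of_nonneg_left hpc hk0
    rw [mul_div_assoc]
    nlinarith
  nlinarith [h1.trans (h2.le.trans h3)]
end

section
/- For every real φ with 0 < |φ| ≤ π and every natural number m ≥ 1, one has 1 − (1 − sin⁴(φ/2)/(8·(1 + cos²(φ/2))))^m ≥ 1 − exp(−m·φ⁴/(16·π⁴)). -/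
/-- Lower bound on the success probability `E_m` of the near-deterministic CZ-gate generation. -/
theorem stmt17 (φ : ℝ) (h0 : 0 < |φ|) (hπ : |φ| ≤ Real.pi) (m : ℕ) (hm : 1 ≤ m) :
    1 - (1 - Real.sin (φ / 2) ^ 4 / (8 * (1 + Real.cos (φ / 2) ^ 2))) ^ m
      ≥ 1 - Real.exp (-(m : ℝ) * φ ^ 4 / (16 * Real.pi ^ 4)) := by
  have hpi := Real.pi_pos
  set p := Real.sin (φ / 2) ^ 4 / (8 * (1 + Real.cos (φ / 2) ^ 2)) with hp
  have hc2 : Real.cos (φ / 2) ^ 2 ≤ 1 := Real.cos_sq_le_one _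
  have hden : (0:ℝ) < 8 * (1 + Real.cos (φ / 2) ^ 2) := by nlinarith [sq_nonneg (Real.cos (φ/2))]
  have hφ4 : (0:ℝ) ≤ φ ^ 4 := by positivity
  -- Jordan: |sin(φ/2)| ≥ |φ|/π
  have hjab : |φ/2| ≤ Real.pi / 2 := by
    rw [abs_div]; simp only [abs_two]; linarith [abs_nonneg φ]
  have hj := Real.mul_abs_le_abs_sin hjab
  have hj' : |φ| / Real.pi ≤ |Real.sin (φ/2)| := by
    rw [abs_div, abs_two] at hj
    calc |φ| / Real.pi = 2 / Real.pi * (|φ|/2) := by field_simp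
    _ ≤ |Real.sin (φ/2)| := hj
  have hsin4 : φ ^ 4 / Real.pi ^ 4 ≤ Real.sin (φ/2) ^ 4 := by
    have h4 := pow_le_pow_left₀ (by positivity) hj' 4
    calc φ ^ 4 / Real.pi ^ 4 = (|φ| / Real.pi) ^ 4 := by
          rw [div_pow]; congr 1; rw [← abs_pow]; exact (abs_of_nonneg hφ4).symm
      _ ≤ |Real.sin (φ/2)| ^ 4 := h4
      _ = Real.sin (φ/2) ^ 4 := by rw [← abs_pow, abs_of_nonneg (by positivity)]
  have hq : φ ^ 4 / (16 * Real.pi ^ 4) ≤ p := by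
    rw [hp, div_le_div_iff₀ (by positivity) hden]
    have := mul_le_mul_of_nonneg_right hsin4 (pow_pos hpi 4).le
    rw [div_mul_cancel₀ _ (pow_pos hpi 4).ne'] at this
    nlinarith
  have hp_lt : p ≤ 1 := by
    rw [hp, div_le_one hden]
    nlinarith [Real.sin_sq_le_one (φ/2), sq_nonneg (Real.sin (φ/2)^2),
      sq_nonneg (Real.cos (φ/2)), pow_le_one₀ (n := 2) (sq_nonneg (Real.sin (φ/2))) (Real.sin_sq_le_one (φ/2))]
  have hp_pos : 0 ≤ p := by rw [hp]; positivity
  have key : (1 - p) ^ m ≤ Real.exp (-(m : ℝ) * φ ^ 4 / (16 * Real.pi ^ 4)) := by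
    have h1 : 1 - p ≤ Real.exp (-(φ ^ 4 / (16 * Real.pi ^ 4))) := by
      have := Real.add_one_le_exp (-(φ ^ 4 / (16 * Real.pi ^ 4)))
      linarith
    calc (1 - p) ^ m ≤ Real.exp (-(φ ^ 4 / (16 * Real.pi ^ 4))) ^ m :=
          pow_le_pow_left₀ (by linarith) h1 m
      _ = Real.exp ((m : ℝ) * -(φ ^ 4 / (16 * Real.pi ^ 4))) := (Real.exp_nat_mul _ m).symm
      _ = Real.exp (-(m : ℝ) * φ ^ 4 / (16 * Real.pi ^ 4)) := by ring_nf
  linarith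
end

section
/- Let φ be real with 0 < |φ| ≤ π, let n ≥ 2 be a natural number, let δ > 0, and let k, m be natural numbers with k ≥ 64·π⁸·φ⁻⁸·log(8·n·(n−1)/δ) and m ≥ 16·π⁴·φ⁻⁴·log(4·n·(n−1)/δ). Define D_k = 1 − (1 − sin⁸(φ/2)/(32·(1+cos²(φ/2))))^k and E_m = 1 − (1 − sin⁴(φ/2)/(8·(1+cos²(φ/2))))^m. Then P(n,k,m) := (D_k²·E_m)^{2n(n−1)} ≥ 1 − δ. -/
private lemma aux_pow_le_exp (s : ℝ) (hs1 : s ≤ 1) (j : ℕ) (L : ℝ)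
    (hjs : L ≤ s * j) : (1 - s) ^ j ≤ Real.exp (-L) := by
  have h1 : (1 - s) ^ j ≤ Real.exp (-s) ^ j := by
    apply pow_le_pow_left₀ (by linarith)
    have := Real.add_one_le_exp (-s); linarith
  have h2 : Real.exp (-s) ^ j = Real.exp ((j : ℝ) * (-s)) := (Real.exp_nat_mul _ j).symm
  rw [h2] at h1
  refine h1.trans (Real.exp_le_exp.2 ?_)
  have : (j : ℝ) * (-s) = -(s * j) := by ring
  rw [this]
  linarith

set_option maxHeartbeats 1000000 in
/-- The overall success probability `P(n,k,m) = (D_k²·E_m)^{2n(n−1)}` of transforming the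
weighted graph state into an `n × n` cluster state is at least `1 − δ` for
`k ≥ 64π⁸φ⁻⁸ log(8n(n−1)/δ)` and `m ≥ 16π⁴φ⁻⁴ log(4n(n−1)/δ)`. -/
theorem stmt18 (φ : ℝ) (h0 : 0 < |φ|) (hπ : |φ| ≤ Real.pi)
    (n : ℕ) (hn : 2 ≤ n) (δ : ℝ) (hδ : 0 < δ) (k m : ℕ)
    (hk : (k : ℝ) ≥ 64 * Real.pi ^ 8 * (φ ^ 8)⁻¹ *
      Real.log (8 * (n : ℝ) * ((n : ℝ) - 1) / δ))
    (hm : (m : ℝ) ≥ 16 * Real.pi ^ 4 * (φ ^ 4)⁻¹ *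
      Real.log (4 * (n : ℝ) * ((n : ℝ) - 1) / δ)) :
    ((1 - (1 - Real.sin (φ / 2) ^ 8 / (32 * (1 + Real.cos (φ / 2) ^ 2))) ^ k) ^ 2 *
        (1 - (1 - Real.sin (φ / 2) ^ 4 / (8 * (1 + Real.cos (φ / 2) ^ 2))) ^ m)) ^
        (2 * n * (n - 1))
      ≥ 1 - δ := by
  have hπpos : 0 < Real.pi := Real.pi_pos
  have hφne : φ ≠ 0 := by rintro rfl; simp at h0
  have hφ8pos : (0:ℝ) < φ ^ 8 := by positivity
  have hφ4pos : (0:ℝ) < φ ^ 4 := by positivity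
  have hπ8pos : (0:ℝ) < Real.pi ^ 8 := by positivity
  have hπ4pos : (0:ℝ) < Real.pi ^ 4 := by positivity
  set c := Real.cos (φ / 2) with hc
  set si := Real.sin (φ / 2) with hsi
  have hc2 : c ^ 2 ≤ 1 := Real.cos_sq_le_one _
  have hden : (0:ℝ) < 1 + c ^ 2 := by positivity
  have hden2 : 1 + c ^ 2 ≤ 2 := by linarith only [hc2]
  have hsi2 : si ^ 2 ≤ 1 := Real.sin_sq_le_one _
  have hsi2nn : (0:ℝ) ≤ si ^ 2 := sq_nonneg _
  have hsi8 : si ^ 8 = (si ^ 2) ^ 4 := by ring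
  have hsi4 : si ^ 4 = (si ^ 2) ^ 2 := by ring
  have hsi8le : si ^ 8 ≤ 1 := by rw [hsi8]; exact pow_le_one₀ hsi2nn hsi2
  have hsi4le : si ^ 4 ≤ 1 := by rw [hsi4]; exact pow_le_one₀ hsi2nn hsi2
  have hsi8nn : (0:ℝ) ≤ si ^ 8 := by rw [hsi8]; positivity
  have hsi4nn : (0:ℝ) ≤ si ^ 4 := by rw [hsi4]; positivity
  -- lower bound on sin
  have hsinlb : |φ| / Real.pi ≤ Real.sin (|φ| / 2) := by
    have h := Real.mul_le_sin (x := |φ| / 2) (by positivity) (by linarith)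
    calc |φ| / Real.pi = 2 / Real.pi * (|φ| / 2) := by ring
    _ ≤ _ := h
  have habs : Real.sin (|φ| / 2) ≤ |si| := by
    rcases abs_cases φ with ⟨h1, _⟩ | ⟨h1, _⟩
    · rw [h1]; exact le_abs_self _
    · rw [h1, neg_div, Real.sin_neg]; exact neg_le_abs _
  have hlbnn : (0:ℝ) ≤ |φ| / Real.pi := by positivity
  have hsin8 : φ ^ 8 / Real.pi ^ 8 ≤ si ^ 8 := by
    have h := pow_le_pow_left₀ hlbnn (hsinlb.trans habs) 8
    have e1 : (|φ| / Real.pi) ^ 8 = φ ^ 8 / Real.pi ^ 8 := by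
      rw [div_pow, ← abs_pow, abs_of_nonneg hφ8pos.le]
    have e2 : |si| ^ 8 = si ^ 8 := by
      rw [← abs_pow, abs_of_nonneg hsi8nn]
    rw [e1, e2] at h; exact h
  have hsin4 : φ ^ 4 / Real.pi ^ 4 ≤ si ^ 4 := by
    have h := pow_le_pow_left₀ hlbnn (hsinlb.trans habs) 4
    have e1 : (|φ| / Real.pi) ^ 4 = φ ^ 4 / Real.pi ^ 4 := by
      rw [div_pow, ← abs_pow, abs_of_nonneg hφ4pos.le]
    have e2 : |si| ^ 4 = si ^ 4 := by
      rw [← abs_pow, abs_of_nonneg hsi4nn]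
    rw [e1, e2] at h; exact h
  clear_value c si
  set s8 := si ^ 8 / (32 * (1 + c ^ 2)) with hs8def
  set s4 := si ^ 4 / (8 * (1 + c ^ 2)) with hs4def
  have hs8nn : 0 ≤ s8 := by rw [hs8def]; positivity
  have hs4nn : 0 ≤ s4 := by rw [hs4def]; positivity
  have hs8le1 : s8 ≤ 1 := by
    rw [hs8def, div_le_one (by positivity)]
    linarith only [hsi8le, sq_nonneg c]
  have hs4le1 : s4 ≤ 1 := by
    rw [hs4def, div_le_one (by positivity)]
    linarith only [hsi4le, sq_nonneg c]
  have key8 : φ ^ 8 ≤ 64 * Real.pi ^ 8 * s8 := by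
    rw [hs8def]
    rw [div_le_iff₀ hπ8pos] at hsin8
    rw [← sub_nonneg]
    have heq : 64 * Real.pi ^ 8 * (si ^ 8 / (32 * (1 + c ^ 2))) - φ ^ 8 =
        (2 * Real.pi ^ 8 * si ^ 8 - φ ^ 8 * (1 + c ^ 2)) / (1 + c ^ 2) := by
      field_simp; ring
    rw [heq]
    apply div_nonneg _ hden.le
    have hx : 0 ≤ φ ^ 8 * (2 - (1 + c ^ 2)) := mul_nonneg hφ8pos.le (by linarith only [hden2])
    linarith only [hx, hsin8]
  have key4 : φ ^ 4 ≤ 16 * Real.pi ^ 4 * s4 := by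
    rw [hs4def]
    rw [div_le_iff₀ hπ4pos] at hsin4
    rw [← sub_nonneg]
    have heq : 16 * Real.pi ^ 4 * (si ^ 4 / (8 * (1 + c ^ 2))) - φ ^ 4 =
        (2 * Real.pi ^ 4 * si ^ 4 - φ ^ 4 * (1 + c ^ 2)) / (1 + c ^ 2) := by
      field_simp; ring
    rw [heq]
    apply div_nonneg _ hden.le
    have hx : 0 ≤ φ ^ 4 * (2 - (1 + c ^ 2)) := mul_nonneg hφ4pos.le (by linarith only [hden2])
    linarith only [hx, hsin4]
  clear_value s8 s4
  clear hs8def hs4def hsi8 hsi4 hsi8le hsi4le hsi8nn hsi4nn hsin8 hsin4 hsinlb habs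
    hlbnn hsi2 hsi2nn hc2 hden hden2 hc hsi
  clear c si
  -- abbreviations
  set D : ℝ := 1 - (1 - s8) ^ k with hD
  set E : ℝ := 1 - (1 - s4) ^ m with hE
  have hqk0 : 0 ≤ (1 - s8) ^ k := pow_nonneg (by linarith only [hs8le1]) _
  have hqk1 : (1 - s8) ^ k ≤ 1 :=
    pow_le_one₀ (by linarith only [hs8le1]) (by linarith only [hs8nn])
  have hrm0 : 0 ≤ (1 - s4) ^ m := pow_nonneg (by linarith only [hs4le1]) _
  have hrm1 : (1 - s4) ^ m ≤ 1 :=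
    pow_le_one₀ (by linarith only [hs4le1]) (by linarith only [hs4nn])
  have hD0 : 0 ≤ D := by rw [hD]; linarith only [hqk1]
  have hD1 : D ≤ 1 := by rw [hD]; linarith only [hqk0]
  have hE0 : 0 ≤ E := by rw [hE]; linarith only [hrm1]
  have hE1 : E ≤ 1 := by rw [hE]; linarith only [hrm0]
  by_cases hδ1 : 1 ≤ δ
  · have hnn : (0:ℝ) ≤ (D ^ 2 * E) ^ (2 * n * (n - 1)) :=
      pow_nonneg (mul_nonneg (pow_nonneg hD0 2) hE0) _
    linarith only [hnn, hδ1]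
  push_neg at hδ1
  -- δ < 1 case
  have hn2 : (2:ℝ) ≤ (n:ℝ) := by exact_mod_cast hn
  set A : ℝ := (n:ℝ) * ((n:ℝ) - 1) with hAdef
  have hA2 : (2:ℝ) ≤ A := by
    rw [hAdef]; nlinarith only [hn2]
  have hApos : 0 < A := by linarith only [hA2]
  have harg8 : (0:ℝ) < 8 * (n:ℝ) * ((n:ℝ) - 1) / δ := by
    apply div_pos (by nlinarith only [hn2]) hδ
  have harg4 : (0:ℝ) < 4 * (n:ℝ) * ((n:ℝ) - 1) / δ := by
    apply div_pos (by nlinarith only [hn2]) hδ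
  set L8 := Real.log (8 * (n:ℝ) * ((n:ℝ) - 1) / δ) with hL8def
  set L4 := Real.log (4 * (n:ℝ) * ((n:ℝ) - 1) / δ) with hL4def
  have hL8nn : 0 ≤ L8 :=
    Real.log_nonneg (by rw [le_div_iff₀ hδ]; nlinarith only [hn2, hδ1])
  have hL4nn : 0 ≤ L4 :=
    Real.log_nonneg (by rw [le_div_iff₀ hδ]; nlinarith only [hn2, hδ1])
  -- k side
  have hk' : 64 * Real.pi ^ 8 * L8 ≤ (k:ℝ) * φ ^ 8 := by
    rw [ge_iff_le] at hk
    have h2 : 64 * Real.pi ^ 8 * L8 / φ ^ 8 ≤ (k:ℝ) := by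
      calc 64 * Real.pi ^ 8 * L8 / φ ^ 8
          = 64 * Real.pi ^ 8 * (φ ^ 8)⁻¹ * L8 := by ring
      _ ≤ (k:ℝ) := hk
    exact (div_le_iff₀ hφ8pos).mp h2
  have hm'' : 16 * Real.pi ^ 4 * L4 ≤ (m:ℝ) * φ ^ 4 := by
    rw [ge_iff_le] at hm
    have h2 : 16 * Real.pi ^ 4 * L4 / φ ^ 4 ≤ (m:ℝ) := by
      calc 16 * Real.pi ^ 4 * L4 / φ ^ 4
          = 16 * Real.pi ^ 4 * (φ ^ 4)⁻¹ * L4 := by ring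
      _ ≤ (m:ℝ) := hm
    exact (div_le_iff₀ hφ4pos).mp h2
  have hLk : L8 ≤ s8 * k := by
    have h1 : s8 * (64 * Real.pi ^ 8 * L8) ≤ s8 * ((k:ℝ) * φ ^ 8) :=
      mul_le_mul_of_nonneg_left hk' hs8nn
    have h2 : φ ^ 8 * L8 ≤ 64 * Real.pi ^ 8 * s8 * L8 :=
      mul_le_mul_of_nonneg_right key8 hL8nn
    have h3 : L8 * φ ^ 8 ≤ (s8 * k) * φ ^ 8 := by nlinarith only [h1, h2]
    exact le_of_mul_le_mul_right h3 hφ8pos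
  have hLm : L4 ≤ s4 * m := by
    have h1 : s4 * (16 * Real.pi ^ 4 * L4) ≤ s4 * ((m:ℝ) * φ ^ 4) :=
      mul_le_mul_of_nonneg_left hm'' hs4nn
    have h2 : φ ^ 4 * L4 ≤ 16 * Real.pi ^ 4 * s4 * L4 :=
      mul_le_mul_of_nonneg_right key4 hL4nn
    have h3 : L4 * φ ^ 4 ≤ (s4 * m) * φ ^ 4 := by nlinarith only [h1, h2]
    exact le_of_mul_le_mul_right h3 hφ4pos
  have hqk : (1 - s8) ^ k ≤ δ / (8 * A) := by
    have h := aux_pow_le_exp s8 hs8le1 k L8 hLk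
    have he : Real.exp (-L8) = δ / (8 * A) := by
      rw [hL8def, Real.exp_neg, Real.exp_log harg8, inv_div]
      rw [hAdef]; ring_nf
    rwa [he] at h
  have hrm : (1 - s4) ^ m ≤ δ / (4 * A) := by
    have h := aux_pow_le_exp s4 hs4le1 m L4 hLm
    have he : Real.exp (-L4) = δ / (4 * A) := by
      rw [hL4def, Real.exp_neg, Real.exp_log harg4, inv_div]
      rw [hAdef]; ring_nf
    rwa [he] at h
  have ha0 : 0 ≤ δ / (8 * A) := by positivity
  have hb0 : 0 ≤ δ / (4 * A) := by positivity
  have ha1 : δ / (8 * A) ≤ 1 / 16 := by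
    rw [div_le_div_iff₀ (by linarith only [hApos]) (by norm_num)]
    linarith only [hδ1, hA2]
  have hb1 : δ / (4 * A) ≤ 1 / 8 := by
    rw [div_le_div_iff₀ (by linarith only [hApos]) (by norm_num)]
    linarith only [hδ1, hA2]
  have hDlb : 1 - δ / (8 * A) ≤ D := by rw [hD]; linarith only [hqk]
  have hElb : 1 - δ / (4 * A) ≤ E := by rw [hE]; linarith only [hrm]
  clear_value D E
  set a := δ / (8 * A) with hadef
  set b := δ / (4 * A) with hbdef
  have hprod : 1 - (2 * a + b) ≤ D ^ 2 * E := by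
    have h1 : (1 - a) ^ 2 * (1 - b) ≤ D ^ 2 * E := by
      apply mul_le_mul _ hElb (by linarith only [hb1]) (by positivity)
      exact pow_le_pow_left₀ (by linarith only [ha1]) hDlb 2
    have hq : 0 ≤ a ^ 2 * (1 - b) :=
      mul_nonneg (sq_nonneg a) (by linarith only [hb1])
    have hab0 : 0 ≤ a * b := mul_nonneg ha0 hb0
    nlinarith only [h1, hq, hab0]
  -- Bernoulli
  have hDE0 : 0 ≤ D ^ 2 * E := mul_nonneg (pow_nonneg hD0 2) hE0
  have hber := one_add_mul_le_pow (a := D ^ 2 * E - 1)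
    (by linarith only [hDE0]) (2 * n * (n - 1))
  rw [add_sub_cancel] at hber
  have hM : ((2 * n * (n - 1) : ℕ) : ℝ) = 2 * A := by
    have h1n : 1 ≤ n := by omega
    rw [hAdef]; push_cast [Nat.cast_sub h1n]; ring
  have hab : 2 * A * (2 * a + b) = δ := by
    rw [hadef, hbdef]; field_simp; ring
  have hfin : 1 - δ ≤ 1 + ((2 * n * (n - 1) : ℕ) : ℝ) * (D ^ 2 * E - 1) := by
    rw [hM]
    have h5 : 2 * A * (1 - (2 * a + b) - 1) ≤ 2 * A * (D ^ 2 * E - 1) :=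
      mul_le_mul_of_nonneg_left (by linarith only [hprod]) (by linarith only [hApos])
    nlinarith only [h5, hab]
  exact le_trans hfin hber
end
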